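/- arXiv:2409.07336 — 6 statements merged into one kernel-verified Lean document; each statement's English description precedes it below -/
import Mathlib

section
/- Let d ∈ ℕ and Φ = (φ₀,…,φ_d) ∈ ℝ^{d+1}, and let P(x) and Q(x) denote the (1,1) and (1,2) entries of the QSP unitary M_Φ(x). Then: (a) for every x ∈ ℝ, the (2,1) entry of M_Φ(x) equals −conj(Q(x)) and the (2,2) entry equals conj(P(x)); (b) there exist complex coefficients a₀,…,a_d with a_j = 0 whenever j ≢ d (mod 2) such that P(x) = Σ_{j=0}^{d} a_j cos(jx) for all x ∈ ℝ; (c) there exist complex coefficients b₁,…,b_d with b_j = 0 whenever j ≢ d (mod 2) such that Q(x) = Σ_{j=1}^{d} b_j sin(jx) for all x ∈ ℝ; (d) |P(x)|² + |Q(x)|² = 1 for all x ∈ ℝ. -/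
/-!
STATEMENT 0 (Necessary conditions for QSP).
For x, φ ∈ ℝ, W(x) is the 2×2 matrix with rows (cos x, i sin x), (i sin x, cos x),
Z(φ) = diag(e^{iφ}, e^{-iφ}).  For Φ = (φ₀,…,φ_d) the QSP unitary is
M_Φ(x) := Z(φ₀)·∏_{k=1}^d (W(x)·Z(φ_k)).
-/

open Complex Matrix
open scoped Matrix

noncomputable def Wgate (x : ℝ) : Matrix (Fin 2) (Fin 2) ℂ :=
  !![(Real.cos x : ℂ), (Real.sin x : ℂ) * Complex.I;
     (Real.sin x : ℂ) * Complex.I, (Real.cos x : ℂ)]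

noncomputable def Zgate (φ : ℝ) : Matrix (Fin 2) (Fin 2) ℂ :=
  !![Complex.exp ((φ : ℂ) * Complex.I), 0;
     0, Complex.exp (-(φ : ℂ) * Complex.I)]

/-- The QSP unitary `M_Φ(x) = Z(φ₀)·∏_{k=1}^d (W(x)·Z(φ_k))`. -/
noncomputable def Mqsp (d : ℕ) (Φ : Fin (d + 1) → ℝ) (x : ℝ) :
    Matrix (Fin 2) (Fin 2) ℂ :=
  Zgate (Φ 0) * (List.ofFn (fun k : Fin d => Wgate x * Zgate (Φ k.succ))).prod

/-!
`W(x)` and `Z(φ)` lie in `SU(2)`, hence so does `M_Φ(x)`. In `SU(2)` the conjugate transpose is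
the adjugate, which gives (a), and the first row is a unit vector, which gives (d).

The first row of `M_Φ(x)` is the first row of the circuit with the last angle `ψ = φ_d` removed,
multiplied by `W(x) Z(ψ)`:
`P' = e^{iψ} (P cos x + i Q sin x)` and `Q' = e^{-iψ} (i P sin x + Q cos x)`.
By the product-to-sum formulas, multiplying a cosine (sine) series of degree `d` and parity `d`
by `cos x` gives a cosine (sine) series of degree `d + 1` and parity `d + 1`, and multiplying by
`sin x` exchanges cosine and sine series in the same way; (b) and (c) follow by induction on `d`.
-/

lemma exists_sum_eq_of_mem_span_image {R M ι : Type*} [Semiring R] [AddCommMonoid M] [Module R M]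
    {v : ι → M} {s : Set ι} {t : Finset ι} (hst : s ⊆ t) {f : M}
    (hf : f ∈ Submodule.span R (v '' s)) :
    ∃ a : ι → R, (∀ j ∉ s, a j = 0) ∧ f = ∑ j ∈ t, a j • v j := by
  obtain ⟨l, hl, rfl⟩ := (Finsupp.mem_span_image_iff_linearCombination R).1 hf
  rw [Finsupp.mem_supported] at hl
  refine ⟨l, fun j hj => Finsupp.notMem_support_iff.1 fun h => hj (hl h), ?_⟩
  rw [Finsupp.linearCombination_apply,
    Finsupp.sum_of_support_subset l (fun j h => hst (hl h)) (fun j a => a • v j)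
      (fun j _ => zero_smul R _)]

lemma mul_mem_of_mem_span {R A : Type*} [CommSemiring R] [Semiring A] [Algebra R A]
    {s : Set A} {N : Submodule R A} {g : A} (h : ∀ f ∈ s, f * g ∈ N) {f : A}
    (hf : f ∈ Submodule.span R s) : f * g ∈ N :=
  (Submodule.span_le (p := N.comap (LinearMap.mulRight R g))).2 h hf

section SpecialUnitary

variable {α : Type*} [CommRing α] [StarRing α]

lemma mem_specialUnitaryGroup_iff_star_eq_adjugate {n : Type*} [Fintype n] [DecidableEq n]
    {A : Matrix n n α} : A ∈ specialUnitaryGroup n α ↔ star A = adjugate A ∧ A.det = 1 := by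
  rw [mem_specialUnitaryGroup_iff]
  refine ⟨fun ⟨hA, hdet⟩ => ⟨?_, hdet⟩, fun ⟨hA, hdet⟩ => ⟨?_, hdet⟩⟩
  · calc star A = star A * (A * adjugate A) := by rw [mul_adjugate, hdet, one_smul, mul_one]
      _ = adjugate A := by rw [← mul_assoc, mem_unitaryGroup_iff'.1 hA, one_mul]
  · rw [mem_unitaryGroup_iff, hA, mul_adjugate, hdet, one_smul]

variable {A : Matrix (Fin 2) (Fin 2) α}

lemma apply_one_zero_of_mem_specialUnitaryGroup (hA : A ∈ specialUnitaryGroup (Fin 2) α) :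
    A 1 0 = -star (A 0 1) := by
  have h := congrFun₂ (mem_specialUnitaryGroup_iff_star_eq_adjugate.1 hA).1 1 0
  rw [star_apply, adjugate_fin_two] at h
  exact neg_eq_iff_eq_neg.mp h.symm

lemma apply_one_one_of_mem_specialUnitaryGroup (hA : A ∈ specialUnitaryGroup (Fin 2) α) :
    A 1 1 = star (A 0 0) := by
  have h := congrFun₂ (mem_specialUnitaryGroup_iff_star_eq_adjugate.1 hA).1 0 0
  rw [star_apply, adjugate_fin_two] at h
  exact h.symm

end SpecialUnitary

lemma sum_norm_sq_of_mem_unitaryGroup {𝕜 n : Type*} [RCLike 𝕜] [Fintype n] [DecidableEq n]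
    {U : Matrix n n 𝕜} (hU : U ∈ unitaryGroup n 𝕜) (i : n) : ∑ j, ‖U i j‖ ^ 2 = 1 := by
  have h := congrFun₂ (mem_unitaryGroup_iff.1 hU) i i
  simp only [mul_apply, star_apply, one_apply_eq, ← starRingEnd_apply, RCLike.mul_conj] at h
  exact_mod_cast h

lemma Wgate_mem_specialUnitaryGroup (x : ℝ) : Wgate x ∈ specialUnitaryGroup (Fin 2) ℂ := by
  rw [mem_specialUnitaryGroup_iff_star_eq_adjugate, Wgate, adjugate_fin_two_of, det_fin_two_of]
  refine ⟨?_, ?_⟩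
  · ext i j
    fin_cases i <;> fin_cases j <;> simp [conj_ofReal, -ofReal_cos, -ofReal_sin]
  · have h : (Real.sin x : ℂ) ^ 2 + (Real.cos x : ℂ) ^ 2 = 1 := by
      exact_mod_cast Real.sin_sq_add_cos_sq x
    linear_combination h - (Real.sin x : ℂ) ^ 2 * I_sq

lemma Zgate_mem_specialUnitaryGroup (φ : ℝ) : Zgate φ ∈ specialUnitaryGroup (Fin 2) ℂ := by
  rw [mem_specialUnitaryGroup_iff_star_eq_adjugate, Zgate, adjugate_fin_two_of, det_fin_two_of]
  refine ⟨?_, ?_⟩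
  · ext i j
    fin_cases i <;> fin_cases j <;> simp [← Complex.exp_conj]
  · simp [← Complex.exp_add]

lemma Mqsp_mem_specialUnitaryGroup (d : ℕ) (Φ : Fin (d + 1) → ℝ) (x : ℝ) :
    Mqsp d Φ x ∈ specialUnitaryGroup (Fin 2) ℂ := by
  refine mul_mem (Zgate_mem_specialUnitaryGroup _) (list_prod_mem ?_)
  simp only [List.forall_mem_ofFn_iff]
  exact fun k => mul_mem (Wgate_mem_specialUnitaryGroup x) (Zgate_mem_specialUnitaryGroup _)

noncomputable def cosHarmonic (j : ℕ) : ℝ → ℂ := fun x => (Real.cos (j * x) : ℂ)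

noncomputable def sinHarmonic (j : ℕ) : ℝ → ℂ := fun x => (Real.sin (j * x) : ℂ)

noncomputable def cosSpan (d : ℕ) : Submodule ℂ (ℝ → ℂ) :=
  Submodule.span ℂ (cosHarmonic '' {j | j ≤ d ∧ j % 2 = d % 2})

noncomputable def sinSpan (d : ℕ) : Submodule ℂ (ℝ → ℂ) :=
  Submodule.span ℂ (sinHarmonic '' {j | j ∈ Finset.Icc 1 d ∧ j % 2 = d % 2})

lemma cosHarmonic_zero : cosHarmonic 0 = 1 := by
  ext x; simp [cosHarmonic]

lemma sinHarmonic_zero : sinHarmonic 0 = 0 := by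
  ext x; simp [sinHarmonic]

lemma cosHarmonic_mem_cosSpan {d j : ℕ} (hjd : j ≤ d) (hj : j % 2 = d % 2) :
    cosHarmonic j ∈ cosSpan d :=
  Submodule.subset_span ⟨j, ⟨hjd, hj⟩, rfl⟩

lemma sinHarmonic_mem_sinSpan {d j : ℕ} (hjd : j ≤ d) (hj : j % 2 = d % 2) :
    sinHarmonic j ∈ sinSpan d := by
  rcases Nat.eq_zero_or_pos j with rfl | hj0
  · rw [sinHarmonic_zero]; exact zero_mem _
  · exact Submodule.subset_span ⟨j, ⟨Finset.mem_Icc.2 ⟨hj0, hjd⟩, hj⟩, rfl⟩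

section ProductToSum

variable (i : ℕ)

private lemma natCast_add_two_mul (x : ℝ) : ((i + 2 : ℕ) : ℝ) * x = ((i + 1 : ℕ) : ℝ) * x + x := by
  push_cast; ring

private lemma natCast_mul_eq_succ_mul_sub (x : ℝ) :
    ((i : ℕ) : ℝ) * x = ((i + 1 : ℕ) : ℝ) * x - x := by
  push_cast; ring

lemma cosHarmonic_succ_mul_cosHarmonic_one :
    cosHarmonic (i + 1) * cosHarmonic 1 = (2⁻¹ : ℂ) • (cosHarmonic (i + 2) + cosHarmonic i) := by
  ext x
  simp only [cosHarmonic, Pi.mul_apply, Pi.smul_apply, Pi.add_apply, smul_eq_mul,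
    natCast_add_two_mul, natCast_mul_eq_succ_mul_sub i x, Real.cos_add, Real.cos_sub, Nat.cast_one,
    one_mul]
  push_cast; ring

lemma sinHarmonic_succ_mul_sinHarmonic_one :
    sinHarmonic (i + 1) * sinHarmonic 1 = (2⁻¹ : ℂ) • (cosHarmonic i - cosHarmonic (i + 2)) := by
  ext x
  simp only [cosHarmonic, sinHarmonic, Pi.mul_apply, Pi.smul_apply, Pi.sub_apply, smul_eq_mul,
    natCast_add_two_mul, natCast_mul_eq_succ_mul_sub i x, Real.cos_add, Real.cos_sub, Nat.cast_one,
    one_mul]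
  push_cast; ring

lemma cosHarmonic_succ_mul_sinHarmonic_one :
    cosHarmonic (i + 1) * sinHarmonic 1 = (2⁻¹ : ℂ) • (sinHarmonic (i + 2) - sinHarmonic i) := by
  ext x
  simp only [cosHarmonic, sinHarmonic, Pi.mul_apply, Pi.smul_apply, Pi.sub_apply, smul_eq_mul,
    natCast_add_two_mul, natCast_mul_eq_succ_mul_sub i x, Real.sin_add, Real.sin_sub, Nat.cast_one,
    one_mul]
  push_cast; ring

lemma sinHarmonic_succ_mul_cosHarmonic_one :
    sinHarmonic (i + 1) * cosHarmonic 1 = (2⁻¹ : ℂ) • (sinHarmonic (i + 2) + sinHarmonic i) := by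
  ext x
  simp only [cosHarmonic, sinHarmonic, Pi.mul_apply, Pi.smul_apply, Pi.add_apply, smul_eq_mul,
    natCast_add_two_mul, natCast_mul_eq_succ_mul_sub i x, Real.sin_add, Real.sin_sub, Nat.cast_one,
    one_mul]
  push_cast; ring

end ProductToSum

lemma mul_cosHarmonic_one_mem_cosSpan {d : ℕ} {f : ℝ → ℂ} (hf : f ∈ cosSpan d) :
    f * cosHarmonic 1 ∈ cosSpan (d + 1) := by
  refine mul_mem_of_mem_span ?_ hf
  rintro _ ⟨_ | i, ⟨hid, hi⟩, rfl⟩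
  · rw [cosHarmonic_zero, one_mul]
    exact cosHarmonic_mem_cosSpan (by omega) (by omega)
  · rw [cosHarmonic_succ_mul_cosHarmonic_one]
    exact Submodule.smul_mem _ _ <| add_mem (cosHarmonic_mem_cosSpan (by omega) (by omega))
      (cosHarmonic_mem_cosSpan (by omega) (by omega))

lemma mul_sinHarmonic_one_mem_cosSpan {d : ℕ} {f : ℝ → ℂ} (hf : f ∈ sinSpan d) :
    f * sinHarmonic 1 ∈ cosSpan (d + 1) := by
  refine mul_mem_of_mem_span ?_ hf
  rintro _ ⟨_ | i, ⟨hid, hi⟩, rfl⟩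
  · simp at hid
  · rw [Finset.mem_Icc] at hid
    rw [sinHarmonic_succ_mul_sinHarmonic_one]
    exact Submodule.smul_mem _ _ <| sub_mem (cosHarmonic_mem_cosSpan (by omega) (by omega))
      (cosHarmonic_mem_cosSpan (by omega) (by omega))

lemma mul_sinHarmonic_one_mem_sinSpan {d : ℕ} {f : ℝ → ℂ} (hf : f ∈ cosSpan d) :
    f * sinHarmonic 1 ∈ sinSpan (d + 1) := by
  refine mul_mem_of_mem_span ?_ hf
  rintro _ ⟨_ | i, ⟨hid, hi⟩, rfl⟩
  · rw [cosHarmonic_zero, one_mul]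
    exact sinHarmonic_mem_sinSpan (by omega) (by omega)
  · rw [cosHarmonic_succ_mul_sinHarmonic_one]
    exact Submodule.smul_mem _ _ <| sub_mem (sinHarmonic_mem_sinSpan (by omega) (by omega))
      (sinHarmonic_mem_sinSpan (by omega) (by omega))

lemma mul_cosHarmonic_one_mem_sinSpan {d : ℕ} {f : ℝ → ℂ} (hf : f ∈ sinSpan d) :
    f * cosHarmonic 1 ∈ sinSpan (d + 1) := by
  refine mul_mem_of_mem_span ?_ hf
  rintro _ ⟨_ | i, ⟨hid, hi⟩, rfl⟩
  · simp at hid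
  · rw [Finset.mem_Icc] at hid
    rw [sinHarmonic_succ_mul_cosHarmonic_one]
    exact Submodule.smul_mem _ _ <| add_mem (sinHarmonic_mem_sinSpan (by omega) (by omega))
      (sinHarmonic_mem_sinSpan (by omega) (by omega))

lemma Mqsp_succ (d : ℕ) (Φ : Fin (d + 2) → ℝ) (x : ℝ) :
    Mqsp (d + 1) Φ x = Mqsp d (Fin.init Φ) x * (Wgate x * Zgate (Φ (Fin.last (d + 1)))) := by
  simp only [Mqsp, List.ofFn_succ', List.concat_eq_append, List.prod_append, List.prod_singleton,
    mul_assoc, Fin.init, Fin.succ_last, Fin.succ_castSucc, Fin.castSucc_zero]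

lemma Mqsp_succ_apply_zero_zero (d : ℕ) (Φ : Fin (d + 2) → ℝ) :
    (fun x => Mqsp (d + 1) Φ x 0 0) = cexp (Φ (Fin.last (d + 1)) * I) •
      ((fun x => Mqsp d (Fin.init Φ) x 0 0) * cosHarmonic 1 +
        I • ((fun x => Mqsp d (Fin.init Φ) x 0 1) * sinHarmonic 1)) := by
  ext x
  simp only [Mqsp_succ, mul_apply, Fin.sum_univ_two, Wgate, Zgate, of_apply, cons_val',
    cons_val_zero, cons_val_one, cons_val_fin_one, Pi.smul_apply, Pi.add_apply, Pi.mul_apply,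
    smul_eq_mul, cosHarmonic, sinHarmonic, Nat.cast_one, one_mul]
  ring

lemma Mqsp_succ_apply_zero_one (d : ℕ) (Φ : Fin (d + 2) → ℝ) :
    (fun x => Mqsp (d + 1) Φ x 0 1) = cexp (-Φ (Fin.last (d + 1)) * I) •
      (I • ((fun x => Mqsp d (Fin.init Φ) x 0 0) * sinHarmonic 1) +
        (fun x => Mqsp d (Fin.init Φ) x 0 1) * cosHarmonic 1) := by
  ext x
  simp only [Mqsp_succ, mul_apply, Fin.sum_univ_two, Wgate, Zgate, of_apply, cons_val',
    cons_val_zero, cons_val_one, cons_val_fin_one, Pi.smul_apply, Pi.add_apply, Pi.mul_apply,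
    smul_eq_mul, cosHarmonic, sinHarmonic, Nat.cast_one, one_mul]
  ring

lemma Mqsp_row_zero_mem (d : ℕ) (Φ : Fin (d + 1) → ℝ) :
    (fun x => Mqsp d Φ x 0 0) ∈ cosSpan d ∧ (fun x => Mqsp d Φ x 0 1) ∈ sinSpan d := by
  induction d with
  | zero =>
    have hP : (fun x => Mqsp 0 Φ x 0 0) = cexp (Φ 0 * I) • cosHarmonic 0 := by
      ext x; simp [Mqsp, Zgate, cosHarmonic]
    have hQ : (fun x => Mqsp 0 Φ x 0 1) = 0 := by
      ext x; simp [Mqsp, Zgate]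
    rw [hP, hQ]
    exact ⟨Submodule.smul_mem _ _ (cosHarmonic_mem_cosSpan le_rfl rfl), zero_mem _⟩
  | succ d ih =>
    obtain ⟨hP, hQ⟩ := ih (Fin.init Φ)
    rw [Mqsp_succ_apply_zero_zero, Mqsp_succ_apply_zero_one]
    exact ⟨Submodule.smul_mem _ _ <| add_mem (mul_cosHarmonic_one_mem_cosSpan hP)
        (Submodule.smul_mem _ _ (mul_sinHarmonic_one_mem_cosSpan hQ)),
      Submodule.smul_mem _ _ <|
        add_mem (Submodule.smul_mem _ _ (mul_sinHarmonic_one_mem_sinSpan hP))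
          (mul_cosHarmonic_one_mem_sinSpan hQ)⟩

theorem qsp_necessary_conditions (d : ℕ) (Φ : Fin (d + 1) → ℝ) :
    -- (a) the second row is determined by the first
    (∀ x : ℝ,
      Mqsp d Φ x 1 0 = -(starRingEnd ℂ) (Mqsp d Φ x 0 1) ∧
      Mqsp d Φ x 1 1 = (starRingEnd ℂ) (Mqsp d Φ x 0 0)) ∧
    -- (b) P(x) = Σ_{j=0}^{d} a_j cos(jx) with a_j = 0 unless j ≡ d (mod 2)
    (∃ a : ℕ → ℂ, (∀ j : ℕ, j % 2 ≠ d % 2 → a j = 0) ∧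
      ∀ x : ℝ, Mqsp d Φ x 0 0 =
        ∑ j ∈ Finset.range (d + 1), a j * (Real.cos (j * x) : ℂ)) ∧
    -- (c) Q(x) = Σ_{j=1}^{d} b_j sin(jx) with b_j = 0 unless j ≡ d (mod 2)
    (∃ b : ℕ → ℂ, (∀ j : ℕ, j % 2 ≠ d % 2 → b j = 0) ∧
      ∀ x : ℝ, Mqsp d Φ x 0 1 =
        ∑ j ∈ Finset.Icc 1 d, b j * (Real.sin (j * x) : ℂ)) ∧
    -- (d) |P(x)|² + |Q(x)|² = 1 for all x
    (∀ x : ℝ,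
      ‖Mqsp d Φ x 0 0‖ ^ 2 + ‖Mqsp d Φ x 0 1‖ ^ 2 = 1) := by
  have hSU := Mqsp_mem_specialUnitaryGroup d Φ
  obtain ⟨hP, hQ⟩ := Mqsp_row_zero_mem d Φ
  obtain ⟨a, ha, hPa⟩ := exists_sum_eq_of_mem_span_image
    (t := Finset.range (d + 1)) (fun j hj => Finset.mem_range.2 (Nat.lt_succ_of_le hj.1)) hP
  obtain ⟨b, hb, hQb⟩ := exists_sum_eq_of_mem_span_image (t := Finset.Icc 1 d) (fun j hj => hj.1) hQ
  refine ⟨fun x => ⟨apply_one_zero_of_mem_specialUnitaryGroup (hSU x),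
      apply_one_one_of_mem_specialUnitaryGroup (hSU x)⟩,
    ⟨a, fun j hj => ha j (fun h => hj h.2), fun x => ?_⟩,
    ⟨b, fun j hj => hb j (fun h => hj h.2), fun x => ?_⟩,
    fun x => by simpa [Fin.sum_univ_two] using sum_norm_sq_of_mem_unitaryGroup (hSU x).1 0⟩
  · simpa [cosHarmonic] using congrFun hPa x
  · simpa [sinHarmonic] using congrFun hQb x
end

section
/- Let d ∈ ℕ and let P, Q : ℝ → ℂ be functions such that: (i) there exist complex coefficients a₀,…,a_d and b₁,…,b_d with P(x) = Σ_{j=0}^{d} a_j cos(jx) and Q(x) = Σ_{j=1}^{d} b_j sin(jx) for all x; (ii) a_j = 0 whenever j ≢ d (mod 2) and b_j = 0 whenever j ≢ d (mod 2); (iii) |P(x)|² + |Q(x)|² = 1 for all x ∈ [−π, π]. Then there exists Φ = (φ₀,…,φ_d) ∈ ℝ^{d+1} such that for all x ∈ [−π, π], the QSP unitary M_Φ(x) equals the 2×2 matrix with rows (P(x), Q(x)) and (−conj(Q(x)), conj(P(x))). -/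
/-!
STATEMENT 1 (Sufficient conditions for QSP).
For x, φ ∈ ℝ, W(x) is the 2×2 matrix with rows (cos x, i sin x), (i sin x, cos x),
Z(φ) = diag(e^{iφ}, e^{-iφ}).  For Φ = (φ₀,…,φ_d) the QSP unitary is
M_Φ(x) := Z(φ₀)·∏_{k=1}^d (W(x)·Z(φ_k)).
-/

open Complex Matrix
open scoped Matrix

/-!
Write `P = ∑_{|j| ≤ d} c_j e^{ijx}` and `Q = ∑_{|j| ≤ d} s_j e^{ijx}` with `c` even, `s` odd, both
supported on `j ≡ d (mod 2)`; by periodicity `|P|² + |Q|² = 1` holds on all of `ℝ`. The coefficient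
of `e^{2idx}` in `P P̄ + Q Q̄` is `c_d c̄_{-d} + s_d s̄_{-d} = |c_d|² - |s_d|²`, so `|c_d| = |s_d|`
and some phase `φ` has `e^{-iφ} c_d = e^{iφ} s_d`. Then
`!![P, Q; -Q̄, P̄] · (W(x) Z(φ))⁻¹ = !![P', Q'; -Q̄', P̄']` where `P'`, `Q'` a priori have degree
`d + 1`: the choice of `φ` kills their coefficients at `±(d + 1)` and parity those at `±d`, so they
have degree `d - 1` and satisfy the same conditions. Induction on `d` peels off one phase at a
time, down to `Z(φ₀)` in degree `0`.
-/

namespace QSP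

open Finset ComplexConjugate

noncomputable def expMode (j : ℤ) (x : ℝ) : ℂ := cexp (j * x * I)

lemma expMode_zero (x : ℝ) : expMode 0 x = 1 := by simp [expMode]

lemma expMode_add (j k : ℤ) (x : ℝ) : expMode (j + k) x = expMode j x * expMode k x := by
  simp only [expMode, ← Complex.exp_add]; push_cast; ring_nf

lemma conj_expMode (j : ℤ) (x : ℝ) : conj (expMode j x) = expMode (-j) x := by
  rw [expMode, expMode, ← Complex.exp_conj]
  simp

lemma expMode_eq_cos_add_sin (j : ℤ) (x : ℝ) :
    expMode j x = Real.cos (j * x) + Real.sin (j * x) * I := by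
  rw [expMode, ofReal_cos, ofReal_sin, ← exp_mul_I]
  push_cast
  ring_nf

lemma expMode_add_expMode_neg (j : ℤ) (x : ℝ) :
    expMode j x + expMode (-j) x = 2 * Real.cos (j * x) := by
  simp only [expMode_eq_cos_add_sin, Int.cast_neg, neg_mul, Real.cos_neg, Real.sin_neg]
  push_cast
  ring

lemma expMode_sub_expMode_neg (j : ℤ) (x : ℝ) :
    expMode j x - expMode (-j) x = 2 * I * Real.sin (j * x) := by
  simp only [expMode_eq_cos_add_sin, Int.cast_neg, neg_mul, Real.cos_neg, Real.sin_neg]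
  push_cast
  ring

lemma expMode_periodic (j : ℤ) : Function.Periodic (expMode j) (2 * Real.pi) := by
  intro x
  have : (j : ℂ) * ((x + 2 * Real.pi : ℝ) : ℂ) * I = j * x * I + j * (2 * Real.pi * I) := by
    push_cast; ring
  rw [expMode, this, Complex.exp_add, Complex.exp_int_mul_two_pi_mul_I, mul_one, expMode]

lemma expMode_injective : Function.Injective expMode := by
  intro j k h
  by_contra hne
  have hjk : ((j - k : ℤ) : ℂ) ≠ 0 := by exact_mod_cast sub_ne_zero.2 hne
  have h1 : expMode (j - k) (Real.pi / (j - k : ℤ)) = -1 := by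
    rw [expMode, ← exp_pi_mul_I]
    congr 1
    push_cast at hjk ⊢
    field_simp
  have h2 : expMode (j - k) (Real.pi / (j - k : ℤ)) = 1 := by
    rw [sub_eq_add_neg, expMode_add, h, ← expMode_add, add_neg_cancel, expMode_zero]
  rw [h1] at h2
  norm_num at h2

/-- Dedekind's independence of characters, for the characters `x ↦ e^{ijx}` of `ℝ`. -/
lemma linearIndependent_expMode : LinearIndependent ℂ expMode := by
  let χ : ℤ → Multiplicative ℝ →* ℂ := fun j =>
    { toFun := fun x => expMode j x.toAdd
      map_one' := by simp [expMode]
      map_mul' := fun x y => by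
        simp only [expMode, toAdd_mul, ← Complex.exp_add]; push_cast; ring_nf }
  refine (linearIndependent_monoidHom (Multiplicative ℝ) ℂ).comp χ fun j k h => ?_
  exact expMode_injective (funext fun x => DFunLike.congr_fun h (Multiplicative.ofAdd x))

noncomputable def trigSum (N : ℕ) (c : ℤ → ℂ) (x : ℝ) : ℂ :=
  ∑ j ∈ Icc (-N : ℤ) N, c j * expMode j x

def DegreeLE (N : ℕ) (c : ℤ → ℂ) : Prop := ∀ j : ℤ, N < j.natAbs → c j = 0

lemma mem_Icc_iff_natAbs_le {N : ℕ} {j : ℤ} : j ∈ Icc (-N : ℤ) N ↔ j.natAbs ≤ N := by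
  simp only [mem_Icc]; omega

lemma trigSum_eq_of_le {N M : ℕ} {c : ℤ → ℂ} (hc : DegreeLE N c) (h : N ≤ M) (x : ℝ) :
    trigSum M c x = trigSum N c x := by
  refine (sum_subset (fun j hj => ?_) fun j _ hj => ?_).symm
  · simp only [mem_Icc_iff_natAbs_le] at hj ⊢; omega
  · rw [mem_Icc_iff_natAbs_le] at hj
    rw [hc j (by omega), zero_mul]

lemma trigSum_periodic (N : ℕ) (c : ℤ → ℂ) : Function.Periodic (trigSum N c) (2 * Real.pi) :=
  fun x => by simp only [trigSum, expMode_periodic _ x]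

lemma conj_trigSum (N : ℕ) (c : ℤ → ℂ) (x : ℝ) :
    conj (trigSum N c x) = trigSum N (fun j => conj (c (-j))) x := by
  rw [trigSum, trigSum, map_sum]
  refine sum_equiv (Equiv.neg ℤ) (fun j => by simp only [mem_Icc, Equiv.neg_apply]; omega)
    fun j _ => ?_
  simp [conj_expMode]

lemma trigSum_unique {N : ℕ} {c d : ℤ → ℂ} (h : ∀ x, trigSum N c x = trigSum N d x) {j : ℤ}
    (hj : j.natAbs ≤ N) : c j = d j := by
  refine sub_eq_zero.1 <| linearIndependent_iff'.1 linearIndependent_expMode _ (c - d)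
    (funext fun x => ?_) j (mem_Icc_iff_natAbs_le.2 hj)
  simpa [sub_mul, sum_sub_distrib, sub_eq_zero, trigSum] using h x

lemma trigSum_shift {N M : ℕ} {c : ℤ → ℂ} (hc : DegreeLE N c) {k : ℤ} (hk : N + k.natAbs ≤ M)
    (x : ℝ) : trigSum M (fun j => c (j - k)) x = expMode k x * trigSum N c x := by
  have hshift : ∑ j ∈ Icc (-N : ℤ) N, expMode k x * (c j * expMode j x)
      = ∑ m ∈ Icc (-N + k) (N + k), c (m - k) * expMode m x := by
    rw [← map_add_right_Icc, sum_map]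
    simp [expMode_add, mul_left_comm, mul_comm]
  rw [trigSum, trigSum, mul_sum, hshift]
  refine (sum_subset (fun j hj => ?_) fun j _ hj => ?_).symm
  · simp only [mem_Icc] at hj ⊢; omega
  · simp only [mem_Icc] at hj
    rw [hc _ (by omega), zero_mul]

lemma trigSum_add (N : ℕ) (c d : ℤ → ℂ) (x : ℝ) :
    trigSum N (c + d) x = trigSum N c x + trigSum N d x := by
  simp only [trigSum, Pi.add_apply, add_mul, sum_add_distrib]

lemma trigSum_single_zero (N : ℕ) (x : ℝ) : trigSum N (Pi.single 0 1) x = 1 := by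
  simp [trigSum, Pi.single_apply, ite_mul, expMode_zero]

lemma trigSum_mul {N K : ℕ} {c : ℤ → ℂ} (hc : DegreeLE N c) (d : ℤ → ℂ) (x : ℝ) :
    trigSum N c x * trigSum K d x
      = trigSum (N + K) (fun m => ∑ k ∈ Icc (-K : ℤ) K, d k * c (m - k)) x := by
  have hterm : ∀ k ∈ Icc (-K : ℤ) K, trigSum N c x * (d k * expMode k x)
      = d k * trigSum (N + K) (fun j => c (j - k)) x := by
    intro k hk
    rw [mem_Icc_iff_natAbs_le] at hk
    rw [trigSum_shift hc (by omega)]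
    ring
  rw [trigSum.eq_1 K, mul_sum, sum_congr rfl hterm]
  simp only [trigSum, mul_sum, sum_mul]
  rw [sum_comm]
  simp only [mul_assoc]

/-- The left-hand side is the coefficient of `e^{2iNx}` in `|∑ c_j e^{ijx}|² + |∑ s_j e^{ijx}|²`. -/
lemma top_coeff_eq_zero {N : ℕ} (hN : 0 < N) {c s : ℤ → ℂ} (hc : DegreeLE N c)
    (hs : DegreeLE N s)
    (h : ∀ x, trigSum N c x * conj (trigSum N c x) + trigSum N s x * conj (trigSum N s x) = 1) :
    c N * conj (c (-N)) + s N * conj (s (-N)) = 0 := by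
  have htop : ∀ f g : ℤ → ℂ, DegreeLE N f →
      ∑ k ∈ Icc (-N : ℤ) N, g k * f (N + N - k) = g N * f N := by
    intro f g hf
    rw [sum_eq_single (N : ℤ) (fun k hk hkN => ?_) (fun hN => ?_), add_sub_cancel_right]
    · rw [mem_Icc] at hk
      rw [hf _ (by omega), mul_zero]
    · exact absurd (mem_Icc_iff_natAbs_le.2 (by omega)) hN
  have hsum : ∀ x, trigSum (N + N) _ x = 1 := fun x => by
    simpa only [conj_trigSum, trigSum_mul hc, trigSum_mul hs, ← trigSum_add] using h x
  have hcoeff := trigSum_unique (fun x => (hsum x).trans (trigSum_single_zero _ x).symm)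
    (j := N + N) (by omega)
  simp only [Pi.add_apply, htop c _ hc, htop s _ hs] at hcoeff
  rw [Pi.single_eq_of_ne (by omega)] at hcoeff
  linear_combination hcoeff

def suMat (p q : ℂ) : Matrix (Fin 2) (Fin 2) ℂ := !![p, q; -conj q, conj p]

lemma suMat_mul (p q r t : ℂ) :
    suMat p q * suMat r t = suMat (p * r - q * conj t) (p * t + q * conj r) := by
  simp only [suMat, mul_fin_two, EmbeddingLike.apply_eq_iff_eq, vecCons_inj, and_true, map_add,
    map_sub, map_mul, conj_conj]
  and_intros <;> ring

lemma det_suMat (p q : ℂ) : (suMat p q).det = p * conj p + q * conj q := by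
  rw [suMat, det_fin_two_of]
  ring

lemma conj_exp_mul_I (φ : ℝ) : conj (cexp (φ * I)) = cexp (-φ * I) := by
  rw [← Complex.exp_conj]
  simp

lemma conj_exp_neg_mul_I (φ : ℝ) : conj (cexp (-φ * I)) = cexp (φ * I) := by
  rw [← conj_exp_mul_I, conj_conj]

lemma exp_mul_I_mul_exp_neg_mul_I (φ : ℝ) : cexp (φ * I) * cexp (-φ * I) = 1 := by
  rw [← Complex.exp_add]
  simp

lemma Zgate_eq_suMat (φ : ℝ) : Zgate φ = suMat (cexp (φ * I)) 0 := by
  simp [Zgate, suMat, conj_exp_mul_I]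

lemma Wgate_mul_Zgate (x φ : ℝ) :
    Wgate x * Zgate φ = suMat (Real.cos x * cexp (φ * I)) (Real.sin x * I * cexp (-φ * I)) := by
  simp only [Wgate, Zgate, suMat, mul_fin_two, EmbeddingLike.apply_eq_iff_eq, vecCons_inj,
    and_true, map_mul, conj_ofReal, conj_I, conj_exp_mul_I, conj_exp_neg_mul_I]
  and_intros <;> ring

lemma suMat_mul_Wgate_mul_Zgate (p q : ℂ) (x φ : ℝ) :
    suMat (Real.cos x * cexp (-φ * I) * p - Real.sin x * I * cexp (φ * I) * q)
        (Real.cos x * cexp (φ * I) * q - Real.sin x * I * cexp (-φ * I) * p)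
        * (Wgate x * Zgate φ) = suMat p q := by
  have hpyth : (Real.cos x : ℂ) ^ 2 + (Real.sin x : ℂ) ^ 2 = 1 := by
    exact_mod_cast Real.cos_sq_add_sin_sq x
  have he := exp_mul_I_mul_exp_neg_mul_I φ
  rw [Wgate_mul_Zgate, suMat_mul]
  simp only [map_mul, conj_ofReal, conj_I, conj_exp_mul_I, conj_exp_neg_mul_I]
  congr 1
  · linear_combination (cexp (-φ * I) * cexp (φ * I) * p) * hpyth + p * he
      - (cexp (-φ * I) * cexp (φ * I) * p * (Real.sin x : ℂ) ^ 2) * I_sq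
  · linear_combination (cexp (-φ * I) * cexp (φ * I) * q) * hpyth + q * he
      - (cexp (-φ * I) * cexp (φ * I) * q * (Real.sin x : ℂ) ^ 2) * I_sq

lemma Mqsp_zero (Φ : Fin 1 → ℝ) (x : ℝ) : Mqsp 0 Φ x = Zgate (Φ 0) := by
  simp [Mqsp]

lemma Mqsp_succ (d : ℕ) (Φ : Fin (d + 2) → ℝ) (x : ℝ) :
    Mqsp (d + 1) Φ x
      = Mqsp d (fun k => Φ k.castSucc) x * (Wgate x * Zgate (Φ (Fin.last (d + 1)))) := by
  rw [Mqsp, List.ofFn_succ', List.prod_concat, ← mul_assoc, Mqsp]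
  simp only [Fin.succ_castSucc, Fin.succ_last, Fin.castSucc_zero]

def HasParity (N : ℕ) (c : ℤ → ℂ) : Prop := ∀ j : ℤ, (j + N) % 2 = 1 → c j = 0

noncomputable def mulCos (c : ℤ → ℂ) (j : ℤ) : ℂ := (c (j - 1) + c (j + 1)) / 2

noncomputable def mulISin (c : ℤ → ℂ) (j : ℤ) : ℂ := (c (j - 1) - c (j + 1)) / 2

lemma trigSum_mulCos {N : ℕ} {c : ℤ → ℂ} (hc : DegreeLE N c) (x : ℝ) :
    trigSum (N + 1) (mulCos c) x = Real.cos x * trigSum N c x := by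
  have hsplit : trigSum (N + 1) (mulCos c) x
      = (trigSum (N + 1) (fun j => c (j - 1)) x + trigSum (N + 1) (fun j => c (j - -1)) x)
        / 2 := by
    simp only [trigSum, mulCos, sub_neg_eq_add, ← sum_add_distrib, sum_div, add_mul, add_div,
      div_mul_eq_mul_div]
  have hcos := expMode_add_expMode_neg 1 x
  rw [Int.cast_one, one_mul] at hcos
  rw [hsplit, trigSum_shift hc (by simp), trigSum_shift hc (by simp)]
  linear_combination (trigSum N c x / 2) * hcos

lemma trigSum_mulISin {N : ℕ} {c : ℤ → ℂ} (hc : DegreeLE N c) (x : ℝ) :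
    trigSum (N + 1) (mulISin c) x = Real.sin x * I * trigSum N c x := by
  have hsplit : trigSum (N + 1) (mulISin c) x
      = (trigSum (N + 1) (fun j => c (j - 1)) x - trigSum (N + 1) (fun j => c (j - -1)) x)
        / 2 := by
    simp only [trigSum, mulISin, sub_neg_eq_add, ← sum_sub_distrib, sum_div, sub_mul, sub_div,
      div_mul_eq_mul_div]
  have hsin := expMode_sub_expMode_neg 1 x
  rw [Int.cast_one, one_mul] at hsin
  rw [hsplit, trigSum_shift hc (by simp), trigSum_shift hc (by simp)]
  linear_combination (trigSum N c x / 2) * hsin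

lemma mulCos_eq_zero_and_mulISin_eq_zero {N : ℕ} {c : ℤ → ℂ} (hc : DegreeLE (N + 1) c)
    (hp : HasParity (N + 1) c) {j : ℤ} (hj : N + 2 < j.natAbs ∨ (j + N) % 2 = 1) :
    mulCos c j = 0 ∧ mulISin c j = 0 := by
  have hvanish (k : ℤ) (hk : k = j - 1 ∨ k = j + 1) : c k = 0 := by
    rcases hj with hj | hj
    exacts [hc _ (by omega), hp _ (by omega)]
  simp [mulCos, mulISin, hvanish (j - 1) (.inl rfl), hvanish (j + 1) (.inr rfl)]

lemma mulCos_neg (c : ℤ → ℂ) (j : ℤ) : mulCos c (-j) = mulCos (fun k => c (-k)) j := by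
  simp only [mulCos]
  rw [add_comm]
  congr 3 <;> ring

lemma mulISin_neg (c : ℤ → ℂ) (j : ℤ) : mulISin c (-j) = -mulISin (fun k => c (-k)) j := by
  simp only [mulISin, ← neg_div, neg_sub]
  congr 3 <;> ring

lemma even_mulCos {c : ℤ → ℂ} (hc : c.Even) : (mulCos c).Even := fun j => by
  rw [mulCos_neg, funext hc.eq]

lemma odd_mulCos {c : ℤ → ℂ} (hc : c.Odd) : (mulCos c).Odd := fun j => by
  rw [mulCos_neg, funext hc.eq, mulCos, mulCos]
  ring

lemma odd_mulISin {c : ℤ → ℂ} (hc : c.Even) : (mulISin c).Odd := fun j => by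
  rw [mulISin_neg, funext hc.eq]

lemma even_mulISin {c : ℤ → ℂ} (hc : c.Odd) : (mulISin c).Even := fun j => by
  rw [mulISin_neg, funext hc.eq, mulISin, mulISin]
  ring

lemma trigSum_mul_sub_mul (N : ℕ) (a b : ℂ) (c d : ℤ → ℂ) (x : ℝ) :
    trigSum N (fun j => a * c j - b * d j) x = a * trigSum N c x - b * trigSum N d x := by
  simp only [trigSum, sub_mul, sum_sub_distrib, mul_sum, mul_assoc]

noncomputable def peelP (φ : ℝ) (c s : ℤ → ℂ) : ℤ → ℂ :=
  fun j => cexp (-φ * I) * mulCos c j - cexp (φ * I) * mulISin s j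

noncomputable def peelQ (φ : ℝ) (c s : ℤ → ℂ) : ℤ → ℂ :=
  fun j => cexp (φ * I) * mulCos s j - cexp (-φ * I) * mulISin c j

lemma suMat_peel_mul_Wgate_mul_Zgate {N : ℕ} {c s : ℤ → ℂ} {φ : ℝ} (hc : DegreeLE (N + 1) c)
    (hs : DegreeLE (N + 1) s) (hP : DegreeLE N (peelP φ c s)) (hQ : DegreeLE N (peelQ φ c s))
    (x : ℝ) :
    suMat (trigSum N (peelP φ c s) x) (trigSum N (peelQ φ c s) x) * (Wgate x * Zgate φ)
      = suMat (trigSum (N + 1) c x) (trigSum (N + 1) s x) := by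
  rw [← trigSum_eq_of_le hP (N.le_add_right 2), ← trigSum_eq_of_le hQ (N.le_add_right 2)]
  unfold peelP peelQ
  rw [trigSum_mul_sub_mul, trigSum_mul_sub_mul, trigSum_mulCos hc, trigSum_mulCos hs,
    trigSum_mulISin hc, trigSum_mulISin hs]
  convert suMat_mul_Wgate_mul_Zgate _ _ x φ using 3 <;> ring

lemma det_Wgate_mul_Zgate (x φ : ℝ) : (Wgate x * Zgate φ).det = 1 := by
  have hpyth : (Real.cos x : ℂ) ^ 2 + (Real.sin x : ℂ) ^ 2 = 1 := by
    exact_mod_cast Real.cos_sq_add_sin_sq x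
  rw [Wgate_mul_Zgate, det_suMat]
  simp only [map_mul, conj_ofReal, conj_I, conj_exp_mul_I, conj_exp_neg_mul_I]
  linear_combination (cexp (φ * I) * cexp (-φ * I)) * hpyth + exp_mul_I_mul_exp_neg_mul_I φ
    - (Real.sin x : ℂ) ^ 2 * cexp (φ * I) * cexp (-φ * I) * I_sq

lemma exists_exp_mul_eq {a b : ℂ} (hab : ‖a‖ = ‖b‖) :
    ∃ φ : ℝ, cexp (-φ * I) * a = cexp (φ * I) * b := by
  refine ⟨(arg a - arg b) / 2, ?_⟩
  calc cexp (-((arg a - arg b) / 2 : ℝ) * I) * a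
      = ‖b‖ * cexp ((arg a + arg b) / 2 * I) := by
        conv_lhs => arg 2; rw [← norm_mul_exp_arg_mul_I a]
        rw [hab, mul_left_comm, ← Complex.exp_add]
        congr 2; push_cast; ring
    _ = cexp (((arg a - arg b) / 2 : ℝ) * I) * b := by
        conv_rhs => arg 2; rw [← norm_mul_exp_arg_mul_I b]
        rw [mul_left_comm, ← Complex.exp_add]
        congr 2; push_cast; ring

lemma degreeLE_and_hasParity_of_top_eq_zero {N : ℕ} {f : ℤ → ℂ}
    (hf : ∀ j : ℤ, N + 2 < j.natAbs ∨ (j + N) % 2 = 1 → f j = 0) (htop : f (N + 2) = 0)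
    (hbot : f (-(N + 2)) = 0) : DegreeLE N f ∧ HasParity N f := by
  refine ⟨fun j hj => ?_, fun j hj => hf j (.inr hj)⟩
  rcases (by omega : N + 2 < j.natAbs ∨ (j + N) % 2 = 1 ∨ j = N + 2 ∨ j = -(N + 2))
    with h | h | rfl | rfl
  exacts [hf j (.inl h), hf j (.inr h), htop, hbot]

/-- The hypotheses of the theorem, for the Fourier coefficients `c`, `s` of `P`, `Q`. -/
structure IsQSPPair (N : ℕ) (c s : ℤ → ℂ) : Prop where
  degreeLE_c : DegreeLE N c
  degreeLE_s : DegreeLE N s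
  hasParity_c : HasParity N c
  hasParity_s : HasParity N s
  even_c : c.Even
  odd_s : s.Odd
  unitary (x : ℝ) :
    trigSum N c x * conj (trigSum N c x) + trigSum N s x * conj (trigSum N s x) = 1

namespace IsQSPPair

variable {N : ℕ} {c s : ℤ → ℂ}

lemma norm_top_eq (h : IsQSPPair (N + 1) c s) : ‖c (N + 1)‖ = ‖s (N + 1)‖ := by
  have htop := top_coeff_eq_zero N.succ_pos h.degreeLE_c h.degreeLE_s h.unitary
  push_cast at htop
  rw [h.even_c.eq, h.odd_s.eq, map_neg, mul_neg, ← sub_eq_add_neg, sub_eq_zero, mul_conj,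
    mul_conj, ofReal_inj, normSq_eq_norm_sq, normSq_eq_norm_sq] at htop
  exact (sq_eq_sq₀ (norm_nonneg _) (norm_nonneg _)).1 htop

lemma peel (h : IsQSPPair (N + 1) c s) {φ : ℝ}
    (hφ : cexp (-φ * I) * c (N + 1) = cexp (φ * I) * s (N + 1)) :
    IsQSPPair N (peelP φ c s) (peelQ φ c s) := by
  have hvanish : ∀ j : ℤ, N + 2 < j.natAbs ∨ (j + N) % 2 = 1 →
      peelP φ c s j = 0 ∧ peelQ φ c s j = 0 := by
    intro j hj
    obtain ⟨hc₁, hc₂⟩ := mulCos_eq_zero_and_mulISin_eq_zero h.degreeLE_c h.hasParity_c hj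
    obtain ⟨hs₁, hs₂⟩ := mulCos_eq_zero_and_mulISin_eq_zero h.degreeLE_s h.hasParity_s hj
    simp [peelP, peelQ, hc₁, hc₂, hs₁, hs₂]
  have heven : (peelP φ c s).Even := fun j => by
    simp only [peelP, (even_mulCos h.even_c).eq, (even_mulISin h.odd_s).eq]
  have hodd : (peelQ φ c s).Odd := fun j => by
    simp only [peelQ, (odd_mulCos h.odd_s).eq, (odd_mulISin h.even_c).eq]
    ring
  have hc₃ : c (N + 2 + 1) = 0 := h.degreeLE_c _ (by omega)
  have hs₃ : s (N + 2 + 1) = 0 := h.degreeLE_s _ (by omega)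
  have hsub : (N : ℤ) + 2 - 1 = N + 1 := by ring
  have htopP : peelP φ c s (N + 2) = 0 := by
    simp only [peelP, mulCos, mulISin, hsub, hc₃, hs₃]
    linear_combination hφ / 2
  have htopQ : peelQ φ c s (N + 2) = 0 := by
    simp only [peelQ, mulCos, mulISin, hsub, hc₃, hs₃]
    linear_combination -hφ / 2
  obtain ⟨hdegP, hparP⟩ := degreeLE_and_hasParity_of_top_eq_zero
    (fun j hj => (hvanish j hj).1) htopP (by rw [heven.eq, htopP])
  obtain ⟨hdegQ, hparQ⟩ := degreeLE_and_hasParity_of_top_eq_zero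
    (fun j hj => (hvanish j hj).2) htopQ (by rw [hodd.eq, htopQ, neg_zero])
  refine ⟨hdegP, hdegQ, hparP, hparQ, heven, hodd, fun x => ?_⟩
  have hdet := congrArg det
    (suMat_peel_mul_Wgate_mul_Zgate h.degreeLE_c h.degreeLE_s hdegP hdegQ x)
  rwa [det_mul, det_Wgate_mul_Zgate, mul_one, det_suMat, det_suMat, h.unitary] at hdet

lemma exists_Mqsp_zero (h : IsQSPPair 0 c s) :
    ∃ Φ : Fin 1 → ℝ, ∀ x, Mqsp 0 Φ x = suMat (trigSum 0 c x) (trigSum 0 s x) := by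
  have htrig (f : ℤ → ℂ) (x : ℝ) : trigSum 0 f x = f 0 := by simp [trigSum, expMode_zero]
  have hs₀ : s 0 = 0 := h.odd_s.map_zero
  have hc₀ : ‖c 0‖ = 1 := by
    have := h.unitary 0
    rwa [htrig, htrig, hs₀, zero_mul, add_zero, mul_conj, ← ofReal_one, ofReal_inj,
      normSq_eq_norm_sq, pow_eq_one_iff_of_nonneg (norm_nonneg _) two_ne_zero] at this
  obtain ⟨θ, hθ⟩ := (norm_eq_one_iff _).1 hc₀
  exact ⟨fun _ => θ, fun x => by rw [Mqsp_zero, Zgate_eq_suMat, htrig, htrig, hs₀, hθ]⟩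

theorem exists_Mqsp_eq : ∀ {N : ℕ} {c s : ℤ → ℂ}, IsQSPPair N c s →
    ∃ Φ : Fin (N + 1) → ℝ, ∀ x, Mqsp N Φ x = suMat (trigSum N c x) (trigSum N s x)
  | 0, _, _, h => h.exists_Mqsp_zero
  | N + 1, c, s, h => by
    obtain ⟨φ, hφ⟩ := exists_exp_mul_eq h.norm_top_eq
    obtain ⟨Φ, hΦ⟩ := exists_Mqsp_eq (h.peel hφ)
    refine ⟨Fin.snoc Φ φ, fun x => ?_⟩
    rw [Mqsp_succ]
    simp only [Fin.snoc_castSucc, Fin.snoc_last]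
    rw [hΦ, suMat_peel_mul_Wgate_mul_Zgate h.degreeLE_c h.degreeLE_s (h.peel hφ).degreeLE_c
      (h.peel hφ).degreeLE_s]

end IsQSPPair

lemma sum_Icc_neg_natCast {M : Type*} [AddCommGroup M] (f : ℤ → M) (N : ℕ) :
    ∑ j ∈ Icc (-N : ℤ) N, f j = f 0 + ∑ k ∈ range N, (f (k + 1) + f (-(k + 1))) := by
  induction N with
  | zero => simp
  | succ N ih =>
    rw [Nat.cast_succ, sum_Icc_succ_eq_add_endpoints, ih, sum_range_succ]
    abel

lemma sum_Icc_one_eq_sum_range {M : Type*} [AddCommMonoid M] (f : ℕ → M) (N : ℕ) :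
    ∑ j ∈ Icc 1 N, f j = ∑ k ∈ range N, f (k + 1) := by
  rw [← Ico_add_one_right_eq_Icc, sum_Ico_eq_sum_range, Nat.add_sub_cancel]
  simp only [add_comm]

noncomputable def cosCoeff (d : ℕ) (a : ℕ → ℂ) (j : ℤ) : ℂ :=
  if d < j.natAbs then 0 else if j = 0 then a 0 else a j.natAbs / 2

noncomputable def sinCoeff (d : ℕ) (b : ℕ → ℂ) (j : ℤ) : ℂ :=
  if d < j.natAbs then 0 else -(I / 2) * j.sign * b j.natAbs

lemma trigSum_cosCoeff (d : ℕ) (a : ℕ → ℂ) (x : ℝ) :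
    trigSum d (cosCoeff d a) x = ∑ j ∈ range (d + 1), a j * Real.cos (j * x) := by
  rw [trigSum, sum_Icc_neg_natCast, sum_range_succ', add_comm]
  congr 1
  · refine sum_congr rfl fun k hk => ?_
    rw [mem_range] at hk
    have hcos := expMode_add_expMode_neg (k + 1) x
    simp only [cosCoeff, show ((k : ℤ) + 1).natAbs = k + 1 by omega,
      show (-((k : ℤ) + 1)).natAbs = k + 1 by omega, if_neg (show ¬d < k + 1 by omega),
      if_neg (show (k : ℤ) + 1 ≠ 0 by omega), if_neg (show -((k : ℤ) + 1) ≠ 0 by omega)]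
    push_cast at hcos ⊢
    linear_combination (a (k + 1) / 2) * hcos
  · simp [cosCoeff, expMode_zero]

lemma trigSum_sinCoeff (d : ℕ) (b : ℕ → ℂ) (x : ℝ) :
    trigSum d (sinCoeff d b) x = ∑ j ∈ Icc 1 d, b j * Real.sin (j * x) := by
  rw [trigSum, sum_Icc_neg_natCast, sum_Icc_one_eq_sum_range]
  simp only [sinCoeff, Int.sign_zero, Int.cast_zero, mul_zero, zero_mul, ite_self, zero_add]
  refine sum_congr rfl fun k hk => ?_
  rw [mem_range] at hk
  have hsin := expMode_sub_expMode_neg (k + 1) x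
  simp only [show ((k : ℤ) + 1).natAbs = k + 1 by omega,
    show (-((k : ℤ) + 1)).natAbs = k + 1 by omega, if_neg (show ¬d < k + 1 by omega),
    Int.sign_neg, show ((k : ℤ) + 1).sign = 1 from Int.sign_eq_one_of_pos (by omega)]
  push_cast at hsin ⊢
  linear_combination (-(I / 2) * b (k + 1)) * hsin
    - b (k + 1) * Complex.sin ((k + 1) * x) * I_sq

lemma isQSPPair_cosCoeff_sinCoeff {d : ℕ} {a b : ℕ → ℂ}
    (ha : ∀ j : ℕ, j % 2 ≠ d % 2 → a j = 0) (hb : ∀ j : ℕ, j % 2 ≠ d % 2 → b j = 0)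
    (hunit : ∀ x, ‖trigSum d (cosCoeff d a) x‖ ^ 2 + ‖trigSum d (sinCoeff d b) x‖ ^ 2 = 1) :
    IsQSPPair d (cosCoeff d a) (sinCoeff d b) where
  degreeLE_c j hj := if_pos hj
  degreeLE_s j hj := if_pos hj
  hasParity_c j hj := by
    unfold cosCoeff
    split_ifs
    · rfl
    · exact ha 0 (by omega)
    · rw [ha _ (by omega), zero_div]
  hasParity_s j hj := by simp only [sinCoeff, hb j.natAbs (by omega), mul_zero, ite_self]
  even_c j := by simp only [cosCoeff, Int.natAbs_neg, neg_eq_zero]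
  odd_s j := by
    simp only [sinCoeff, Int.natAbs_neg, Int.sign_neg, Int.cast_neg]
    split_ifs <;> ring
  unitary x := by
    rw [mul_conj, mul_conj, normSq_eq_norm_sq, normSq_eq_norm_sq]
    exact_mod_cast hunit x

end QSP

open QSP

theorem qsp_sufficient_conditions (d : ℕ) (P Q : ℝ → ℂ) (a b : ℕ → ℂ)
    -- (i) P(x) = Σ_{j=0}^{d} a_j cos(jx), Q(x) = Σ_{j=1}^{d} b_j sin(jx)
    (hP : ∀ x : ℝ, P x = ∑ j ∈ Finset.range (d + 1), a j * (Real.cos (j * x) : ℂ))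
    (hQ : ∀ x : ℝ, Q x = ∑ j ∈ Finset.Icc 1 d, b j * (Real.sin (j * x) : ℂ))
    -- (ii) parity: a_j = 0 and b_j = 0 whenever j ≢ d (mod 2)
    (ha : ∀ j : ℕ, j % 2 ≠ d % 2 → a j = 0)
    (hb : ∀ j : ℕ, j % 2 ≠ d % 2 → b j = 0)
    -- (iii) |P(x)|² + |Q(x)|² = 1 on [−π, π]
    (hnorm : ∀ x ∈ Set.Icc (-Real.pi) Real.pi,
      ‖P x‖ ^ 2 + ‖Q x‖ ^ 2 = 1) :
    ∃ Φ : Fin (d + 1) → ℝ, ∀ x ∈ Set.Icc (-Real.pi) Real.pi,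
      Mqsp d Φ x =
        !![P x, Q x; -(starRingEnd ℂ) (Q x), (starRingEnd ℂ) (P x)] := by
  have hP' (x : ℝ) : P x = trigSum d (cosCoeff d a) x := by rw [hP, trigSum_cosCoeff]
  have hQ' (x : ℝ) : Q x = trigSum d (sinCoeff d b) x := by rw [hQ, trigSum_sinCoeff]
  have hper : Function.Periodic (fun x => ‖P x‖ ^ 2 + ‖Q x‖ ^ 2) (2 * Real.pi) := fun x => by
    simp only [hP', hQ', trigSum_periodic _ _ x]
  have hunit (x : ℝ) : ‖P x‖ ^ 2 + ‖Q x‖ ^ 2 = 1 := by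
    obtain ⟨y, hy, hxy⟩ := hper.exists_mem_Ico Real.two_pi_pos x (-Real.pi)
    refine hxy.trans (hnorm y (Set.Ico_subset_Icc_self ?_))
    rwa [show -Real.pi + 2 * Real.pi = Real.pi by ring] at hy
  have hpair := isQSPPair_cosCoeff_sinCoeff ha hb fun x => by simpa only [hP', hQ'] using hunit x
  obtain ⟨Φ, hΦ⟩ := hpair.exists_Mqsp_eq
  exact ⟨Φ, fun x _ => by rw [hΦ, suMat, hP', hQ']⟩
end

section
/- Let V = ℂ^N be a finite-dimensional complex inner product space, U a unitary operator on V, Π an orthogonal projection on V (Π² = Π = Π†), |0̄⟩ ∈ V a unit vector, |ψ⟩ ∈ V a unit vector, and a a real number with 0 < a ≤ 1, such that Π U |0̄⟩ = a|ψ⟩. Let k := ⌈π/(4·arcsin(a)) − 1/2⌉ and θ := π/(4k+2). Let R be a unitary operator on ℂ² whose (1,1) entry (i.e., ⟨0|R|0⟩) equals sin(θ)/a. Define U′ := R ⊗ U on ℂ² ⊗ V, and W′ := U′ · (2(|0⟩⟨0| ⊗ |0̄⟩⟨0̄|) − I) · U′† · (I − 2(|0⟩⟨0| ⊗ Π)).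 Then (|0⟩⟨0| ⊗ Π) · (W′)^k · U′ · (|0⟩ ⊗ |0̄⟩) = |0⟩ ⊗ |ψ⟩. -/
/-!
Write `Φ = U′(|0⟩ ⊗ |0̄⟩)`, `g = |0⟩ ⊗ |ψ⟩` and `P = |0⟩⟨0| ⊗ Π`. The choice of `R` makes
`P Φ = sin θ · g` and `⟨Φ, g⟩ = sin θ`, and `W′ = (2|Φ⟩⟨Φ| − I)(I − 2P)` because `U′` is unitary.
On the plane spanned by `g` and `v = (Φ − sin θ · g) / cos θ` the operator `W′` is the rotation
by `2θ`, and `Φ = sin θ · g + cos θ · v`, so `W′ᵏ Φ = sin((2k+1)θ) · g + cos((2k+1)θ) · v = g`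
because `(2k+1)θ = π/2`.
-/

open Complex Matrix
open scoped Matrix Kronecker

def vecKron {α m n : Type*} [Mul α] (x : m → α) (y : n → α) : m × n → α := fun q => x q.1 * y q.2

section Kronecker

variable {α l m n p : Type*} [CommSemiring α]

theorem kronecker_mulVec_vecKron [Fintype m] [Fintype p] (A : Matrix l m α) (B : Matrix n p α)
    (x : m → α) (y : p → α) : (A ⊗ₖ B) *ᵥ vecKron x y = vecKron (A *ᵥ x) (B *ᵥ y) := by
  funext q
  simp only [vecKron, mulVec, dotProduct, kroneckerMap_apply, Fintype.sum_prod_type,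
    Finset.sum_mul_sum]
  exact Finset.sum_congr rfl fun i _ => Finset.sum_congr rfl fun j _ => by ring

theorem vecKron_dotProduct_vecKron [Fintype m] [Fintype n] (x x' : m → α) (y y' : n → α) :
    vecKron x y ⬝ᵥ vecKron x' y' = (x ⬝ᵥ x') * (y ⬝ᵥ y') := by
  simp only [vecKron, dotProduct, Fintype.sum_prod_type, Finset.sum_mul_sum]
  exact Finset.sum_congr rfl fun i _ => Finset.sum_congr rfl fun j _ => by ring

theorem star_vecKron [StarRing α] (x : m → α) (y : n → α) :
    star (vecKron x y) = vecKron (star x) (star y) := by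
  funext q
  simp [vecKron]

theorem vecMulVec_kronecker_vecMulVec (x : l → α) (y : m → α) (z : n → α) (w : p → α) :
    vecMulVec x y ⊗ₖ vecMulVec z w = vecMulVec (vecKron x z) (vecKron y w) := by
  ext ⟨i, j⟩ ⟨i', j'⟩
  simp only [kroneckerMap_apply, vecMulVec_apply, vecKron]
  ring

theorem smul_vecKron_smul (c d : α) (x : m → α) (y : n → α) :
    vecKron (c • x) (d • y) = (c * d) • vecKron x y := by
  funext q
  simp only [vecKron, Pi.smul_apply, smul_eq_mul]
  ring

end Kronecker

theorem mul_vecMulVec_star_mul_conjTranspose {α m n : Type*} [CommSemiring α] [StarRing α]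
    [Fintype n] (M : Matrix m n α) (x : n → α) :
    M * vecMulVec x (star x) * Mᴴ = vecMulVec (M *ᵥ x) (star (M *ᵥ x)) := by
  rw [mul_vecMulVec, vecMulVec_mul, star_mulVec]

theorem vecMulVec_star_mulVec {α n : Type*} [CommSemiring α] [StarRing α] [Fintype n]
    (x y : n → α) : vecMulVec x (star x) *ᵥ y = (star x ⬝ᵥ y) • x := by
  rw [vecMulVec_mulVec, op_smul_eq_smul]

section Unitary

variable {α n : Type*} [CommRing α] [StarRing α] [Fintype n] [DecidableEq n]

theorem star_mulVec_dotProduct_mulVec {U : Matrix n n α} (hU : U ∈ unitary (Matrix n n α))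
    (x y : n → α) : star (U *ᵥ x) ⬝ᵥ (U *ᵥ y) = star x ⬝ᵥ y := by
  rw [star_mulVec, dotProduct_mulVec, vecMul_vecMul, ← star_eq_conjTranspose,
    Unitary.star_mul_self_of_mem hU, vecMul_one]

theorem mul_reflection_mul_conjTranspose {U : Matrix n n α}
    (hU : U ∈ unitary (Matrix n n α)) (x : n → α) :
    U * ((2 : α) • vecMulVec x (star x) - 1) * Uᴴ =
      (2 : α) • vecMulVec (U *ᵥ x) (star (U *ᵥ x)) - 1 := by
  rw [mul_sub, sub_mul, mul_one, ← star_eq_conjTranspose, Unitary.mul_star_self_of_mem hU,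
    mul_smul_comm, smul_mul_assoc, star_eq_conjTranspose, mul_vecMulVec_star_mul_conjTranspose]

end Unitary

theorem star_dotProduct_self_eq_sum_normSq {n : Type*} [Fintype n] (v : n → ℂ) :
    star v ⬝ᵥ v = ((∑ i, normSq (v i) : ℝ) : ℂ) := by
  simp [dotProduct, normSq_eq_conj_mul_self]

theorem mulVec_eq_self_of_mulVec_eq_smul {α n : Type*} [Field α] [Fintype n]
    {P : Matrix n n α} (hP : P * P = P) {x ψ : n → α} {c : α} (hc : c ≠ 0)
    (h : P *ᵥ x = c • ψ) : P *ᵥ ψ = ψ := by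
  have h2 : P *ᵥ (P *ᵥ x) = P *ᵥ x := by rw [mulVec_mulVec, hP]
  rw [h, mulVec_smul] at h2
  exact smul_right_injective _ hc h2

theorem star_dotProduct_eq_of_mulVec_eq_smul {α n : Type*} [CommSemiring α] [StarRing α]
    [Fintype n] {P : Matrix n n α} (hP : Pᴴ = P) {x ψ : n → α} {c : α}
    (hPψ : P *ᵥ ψ = ψ) (h : P *ᵥ x = c • ψ) : star x ⬝ᵥ ψ = star c * (star ψ ⬝ᵥ ψ) := by
  rw [← hPψ, dotProduct_mulVec, ← hP, ← star_mulVec, hP, h, star_smul, smul_dotProduct, hPψ,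
    smul_eq_mul]

theorem pow_mulVec_of_rotation {n : Type*} [Fintype n] [DecidableEq n] {W : Matrix n n ℂ}
    {u v : n → ℂ} {α : ℂ} (hu : W *ᵥ u = cos α • u - sin α • v)
    (hv : W *ᵥ v = sin α • u + cos α • v) (φ : ℂ) (j : ℕ) :
    W ^ j *ᵥ (sin φ • u + cos φ • v) = sin (φ + j * α) • u + cos (φ + j * α) • v := by
  induction j with
  | zero => simp
  | succ j ih =>
    rw [pow_succ', ← mulVec_mulVec, ih, mulVec_add, mulVec_smul, mulVec_smul, hu, hv,
      Nat.cast_succ, add_one_mul, ← add_assoc, sin_add (φ + j * α), cos_add (φ + j * α)]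
    module

section Grover

variable {n : Type*} [Fintype n] [DecidableEq n]

def groverIterate (P : Matrix n n ℂ) (Φ : n → ℂ) : Matrix n n ℂ :=
  ((2 : ℂ) • vecMulVec Φ (star Φ) - 1) * (1 - (2 : ℂ) • P)

variable {P : Matrix n n ℂ} {Φ g : n → ℂ} {θ : ℂ}

theorem reflection_mulVec (Φ x : n → ℂ) :
    ((2 : ℂ) • vecMulVec Φ (star Φ) - 1) *ᵥ x = (2 * (star Φ ⬝ᵥ x)) • Φ - x := by
  rw [sub_mulVec, smul_mulVec, vecMulVec_star_mulVec, one_mulVec, smul_smul]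

theorem groverIterate_mulVec_target (hPg : P *ᵥ g = g) (hΦg : star Φ ⬝ᵥ g = sin θ)
    (hcos : cos θ ≠ 0) :
    groverIterate P Φ *ᵥ g = cos (2 * θ) • g - sin (2 * θ) • (cos θ)⁻¹ • (Φ - sin θ • g) := by
  have hrefl : (1 - (2 : ℂ) • P) *ᵥ g = -g := by
    rw [sub_mulVec, one_mulVec, smul_mulVec, hPg]; module
  rw [groverIterate, ← mulVec_mulVec, hrefl, reflection_mulVec, dotProduct_neg, hΦg,
    sin_two_mul, cos_two_mul, cos_sq', smul_smul, mul_assoc, mul_inv_cancel₀ hcos]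
  module

theorem groverIterate_mulVec_complement (hPg : P *ᵥ g = g) (hPΦ : P *ᵥ Φ = sin θ • g)
    (hΦ : star Φ ⬝ᵥ Φ = 1) (hΦg : star Φ ⬝ᵥ g = sin θ) (hcos : cos θ ≠ 0) :
    groverIterate P Φ *ᵥ (cos θ)⁻¹ • (Φ - sin θ • g) =
      sin (2 * θ) • g + cos (2 * θ) • (cos θ)⁻¹ • (Φ - sin θ • g) := by
  set v := (cos θ)⁻¹ • (Φ - sin θ • g)
  have hrefl : (1 - (2 : ℂ) • P) *ᵥ v = v := by
    rw [sub_mulVec, one_mulVec, smul_mulVec, mulVec_smul, mulVec_sub, mulVec_smul, hPΦ, hPg]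
    module
  have hΦv : star Φ ⬝ᵥ v = cos θ := by
    rw [dotProduct_smul, dotProduct_sub, dotProduct_smul, hΦ, hΦg, smul_eq_mul, smul_eq_mul,
      ← sq, ← cos_sq', sq, inv_mul_cancel_left₀ hcos]
  rw [groverIterate, ← mulVec_mulVec, hrefl, reflection_mulVec, hΦv, sin_two_mul, cos_two_mul]
  simp only [v]
  match_scalars <;> field_simp
  ring

theorem groverIterate_pow_mulVec (hPg : P *ᵥ g = g) (hPΦ : P *ᵥ Φ = sin θ • g)
    (hΦ : star Φ ⬝ᵥ Φ = 1) (hΦg : star Φ ⬝ᵥ g = sin θ) (hcos : cos θ ≠ 0) (j : ℕ) :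
    groverIterate P Φ ^ j *ᵥ Φ =
      sin ((2 * j + 1) * θ) • g + cos ((2 * j + 1) * θ) • (cos θ)⁻¹ • (Φ - sin θ • g) := by
  have hΦ_eq : Φ = sin θ • g + cos θ • (cos θ)⁻¹ • (Φ - sin θ • g) := by
    rw [smul_inv_smul₀ hcos]; module
  rw [show (2 * (j : ℂ) + 1) * θ = θ + j * (2 * θ) by ring]
  conv_lhs => arg 2; rw [hΦ_eq]
  exact pow_mulVec_of_rotation (groverIterate_mulVec_target hPg hΦg hcos)
    (groverIterate_mulVec_complement hPg hPΦ hΦ hΦg hcos) θ j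

theorem mulVec_groverIterate_pow_mulVec_self {k : ℕ} {θ : ℝ} (hθ : θ = Real.pi / (4 * k + 2))
    (hPg : P *ᵥ g = g) (hPΦ : P *ᵥ Φ = sin (θ : ℂ) • g) (hΦ : star Φ ⬝ᵥ Φ = 1)
    (hΦg : star Φ ⬝ᵥ g = sin (θ : ℂ)) :
    P *ᵥ (groverIterate P Φ ^ k *ᵥ Φ) = g := by
  rcases Nat.eq_zero_or_pos k with rfl | hk
  -- For `k = 0` the rotation basis degenerates (`cos θ = 0`), but then `P Φ = g` already.
  · rw [pow_zero, one_mulVec, hPΦ, hθ]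
    norm_num
  have hθ_lt : θ < Real.pi / 2 := by
    rw [hθ]
    gcongr
    have : (1 : ℝ) ≤ k := by exact_mod_cast hk
    linarith
  have hθ_pos : 0 < θ := by rw [hθ]; positivity
  have hcos : cos (θ : ℂ) ≠ 0 := by
    rw [← ofReal_cos]
    exact ofReal_ne_zero.mpr (Real.cos_pos_of_mem_Ioo ⟨by linarith, hθ_lt⟩).ne'
  have hquarter : (2 * (k : ℂ) + 1) * θ = Real.pi / 2 := by
    have : (2 * (k : ℝ) + 1) * θ = Real.pi / 2 := by rw [hθ]; field_simp; ring
    exact_mod_cast this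
  rw [groverIterate_pow_mulVec hPg hPΦ hΦ hΦg hcos, hquarter, sin_pi_div_two, cos_pi_div_two,
    zero_smul, add_zero, one_smul, hPg]

end Grover

theorem kronecker_groverIterate_pow_mulVec {m n : Type*} [Fintype m] [DecidableEq m]
    [Fintype n] [DecidableEq n] {R : Matrix m m ℂ} {U Pr : Matrix n n ℂ}
    (hR : R ∈ unitary (Matrix m m ℂ)) (hU : U ∈ unitary (Matrix n n ℂ))
    (hPr : Pr * Pr = Pr) (hPrSA : Prᴴ = Pr) {e : m → ℂ} {z ψ : n → ℂ}
    (he : star e ⬝ᵥ e = 1) (hz : star z ⬝ᵥ z = 1) (hψ : star ψ ⬝ᵥ ψ = 1) {a : ℝ} (ha : a ≠ 0)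
    (hamp : Pr *ᵥ (U *ᵥ z) = (a : ℂ) • ψ) {k : ℕ} {θ : ℝ} (hθ : θ = Real.pi / (4 * k + 2))
    (hRe : star e ⬝ᵥ (R *ᵥ e) = ((Real.sin θ / a : ℝ) : ℂ)) :
    (vecMulVec e (star e) ⊗ₖ Pr) *ᵥ
      (((R ⊗ₖ U) * ((2 : ℂ) • (vecMulVec e (star e) ⊗ₖ vecMulVec z (star z)) - 1) *
        (R ⊗ₖ U)ᴴ * (1 - (2 : ℂ) • (vecMulVec e (star e) ⊗ₖ Pr))) ^ k * (R ⊗ₖ U)) *ᵥ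
        vecKron e z = vecKron e ψ := by
  have hU' := kronecker_mem_unitary hR hU
  have hΦ : (R ⊗ₖ U) *ᵥ vecKron e z = vecKron (R *ᵥ e) (U *ᵥ z) := kronecker_mulVec_vecKron ..
  have hPrψ : Pr *ᵥ ψ = ψ := mulVec_eq_self_of_mulVec_eq_smul hPr (ofReal_ne_zero.mpr ha) hamp
  have hsin : ((Real.sin θ / a : ℝ) : ℂ) * a = sin θ := by
    rw [← ofReal_mul, div_mul_cancel₀ _ ha, ofReal_sin]
  rw [vecMulVec_kronecker_vecMulVec, ← star_vecKron, mul_reflection_mul_conjTranspose hU',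
    ← mulVec_mulVec]
  refine mulVec_groverIterate_pow_mulVec_self hθ ?_ ?_ ?_ ?_
  · rw [kronecker_mulVec_vecKron, vecMulVec_star_mulVec, he, one_smul, hPrψ]
  · rw [hΦ, kronecker_mulVec_vecKron, vecMulVec_star_mulVec, hamp, smul_vecKron_smul, hRe, hsin]
  · rw [star_mulVec_dotProduct_mulVec hU', star_vecKron, vecKron_dotProduct_vecKron, he, hz,
      one_mul]
  · rw [hΦ, star_vecKron, vecKron_dotProduct_vecKron, star_dotProduct,
      star_dotProduct_eq_of_mulVec_eq_smul hPrSA hPrψ hamp, hψ, hRe, star_def, conj_ofReal,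
      conj_ofReal, mul_one, hsin]

theorem exact_amplitude_amplification_general {N : ℕ}
    (U Pr : Matrix (Fin N) (Fin N) ℂ)
    -- U is unitary
    (hU : U ∈ Matrix.unitaryGroup (Fin N) ℂ)
    -- Π is an orthogonal projection: Π² = Π = Π†
    (hPrProj : Pr * Pr = Pr) (hPrSA : Pr.conjTranspose = Pr)
    -- |0̄⟩ and |ψ⟩ are unit vectors
    (zbar ψ : Fin N → ℂ)
    (hzbar : ∑ i, Complex.normSq (zbar i) = 1)
    (hψ : ∑ i, Complex.normSq (ψ i) = 1)
    -- 0 < a ≤ 1 and Π U |0̄⟩ = a |ψ⟩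
    (a : ℝ) (ha : 0 < a)
    (hamp : Pr.mulVec (U.mulVec zbar) = (a : ℂ) • ψ)
    -- k := ⌈π/(4 arcsin a) − 1/2⌉ and θ := π/(4k+2)
    (k : ℕ)
    (θ : ℝ) (hθ : θ = Real.pi / (4 * k + 2))
    -- R is a single-qubit unitary with ⟨0|R|0⟩ = sin(θ)/a
    (R : Matrix (Fin 2) (Fin 2) ℂ)
    (hR : R ∈ Matrix.unitaryGroup (Fin 2) ℂ)
    (hR00 : R 0 0 = ((Real.sin θ / a : ℝ) : ℂ)) :
    -- |0⟩⟨0| on the ancilla qubit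
    let P0 : Matrix (Fin 2) (Fin 2) ℂ := !![1, 0; 0, 0]
    -- |0̄⟩⟨0̄|
    let Pzbar : Matrix (Fin N) (Fin N) ℂ := Matrix.vecMulVec zbar (star zbar)
    -- U′ := R ⊗ U
    let U' : Matrix (Fin 2 × Fin N) (Fin 2 × Fin N) ℂ := R ⊗ₖ U
    -- W′ := U′ (2|0⟩⟨0| ⊗ |0̄⟩⟨0̄| − I) U′† (I − 2|0⟩⟨0| ⊗ Π)
    let W' : Matrix (Fin 2 × Fin N) (Fin 2 × Fin N) ℂ :=
      U' * ((2 : ℂ) • (P0 ⊗ₖ Pzbar) - 1) * U'.conjTranspose *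
        (1 - (2 : ℂ) • (P0 ⊗ₖ Pr))
    -- conclusion: (|0⟩⟨0| ⊗ Π) (W′)^k U′ (|0⟩ ⊗ |0̄⟩) = |0⟩ ⊗ |ψ⟩
    (P0 ⊗ₖ Pr).mulVec ((W' ^ k * U').mulVec
        (fun p => (if p.1 = 0 then 1 else 0) * zbar p.2)) =
      fun p => (if p.1 = 0 then 1 else 0) * ψ p.2 := by
  dsimp only
  set e0 : Fin 2 → ℂ := Pi.single 0 1
  have hvec (v : Fin N → ℂ) :
      (fun p : Fin 2 × Fin N => (if p.1 = 0 then 1 else 0) * v p.2) = vecKron e0 v := by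
    funext p
    simp [vecKron, e0, Pi.single_apply]
  have hP0 : !![1, 0; 0, 0] = vecMulVec e0 (star e0) := by
    ext i j
    fin_cases i <;> fin_cases j <;> simp [e0, vecMulVec_apply]
  have hunit (v : Fin N → ℂ) (hv : ∑ i, normSq (v i) = 1) : star v ⬝ᵥ v = 1 := by
    rw [star_dotProduct_self_eq_sum_normSq, hv, ofReal_one]
  rw [hvec, hvec, hP0]
  exact kronecker_groverIterate_pow_mulVec hR hU hPrProj hPrSA (by simp [e0]) (hunit zbar hzbar)
    (hunit ψ hψ) ha.ne' hamp hθ (by simpa [e0] using hR00)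

theorem exact_amplitude_amplification {N : ℕ}
    (U Pr : Matrix (Fin N) (Fin N) ℂ)
    -- U is unitary
    (hU : U ∈ Matrix.unitaryGroup (Fin N) ℂ)
    -- Π is an orthogonal projection: Π² = Π = Π†
    (hPrProj : Pr * Pr = Pr) (hPrSA : Pr.conjTranspose = Pr)
    -- |0̄⟩ and |ψ⟩ are unit vectors
    (zbar ψ : Fin N → ℂ)
    (hzbar : ∑ i, Complex.normSq (zbar i) = 1)
    (hψ : ∑ i, Complex.normSq (ψ i) = 1)
    -- 0 < a ≤ 1 and Π U |0̄⟩ = a |ψ⟩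
    (a : ℝ) (ha : 0 < a) (ha1 : a ≤ 1)
    (hamp : Pr.mulVec (U.mulVec zbar) = (a : ℂ) • ψ)
    -- k := ⌈π/(4 arcsin a) − 1/2⌉ and θ := π/(4k+2)
    (k : ℕ) (hk : k = ⌈Real.pi / (4 * Real.arcsin a) - 1 / 2⌉₊)
    (θ : ℝ) (hθ : θ = Real.pi / (4 * k + 2))
    -- R is a single-qubit unitary with ⟨0|R|0⟩ = sin(θ)/a
    (R : Matrix (Fin 2) (Fin 2) ℂ)
    (hR : R ∈ Matrix.unitaryGroup (Fin 2) ℂ)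
    (hR00 : R 0 0 = ((Real.sin θ / a : ℝ) : ℂ)) :
    -- |0⟩⟨0| on the ancilla qubit
    let P0 : Matrix (Fin 2) (Fin 2) ℂ := !![1, 0; 0, 0]
    -- |0̄⟩⟨0̄|
    let Pzbar : Matrix (Fin N) (Fin N) ℂ := Matrix.vecMulVec zbar (star zbar)
    -- U′ := R ⊗ U
    let U' : Matrix (Fin 2 × Fin N) (Fin 2 × Fin N) ℂ := R ⊗ₖ U
    -- W′ := U′ (2|0⟩⟨0| ⊗ |0̄⟩⟨0̄| − I) U′† (I − 2|0⟩⟨0| ⊗ Π)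
    let W' : Matrix (Fin 2 × Fin N) (Fin 2 × Fin N) ℂ :=
      U' * ((2 : ℂ) • (P0 ⊗ₖ Pzbar) - 1) * U'.conjTranspose *
        (1 - (2 : ℂ) • (P0 ⊗ₖ Pr))
    -- conclusion: (|0⟩⟨0| ⊗ Π) (W′)^k U′ (|0⟩ ⊗ |0̄⟩) = |0⟩ ⊗ |ψ⟩
    (P0 ⊗ₖ Pr).mulVec ((W' ^ k * U').mulVec
        (fun p => (if p.1 = 0 then 1 else 0) * zbar p.2)) =
      fun p => (if p.1 = 0 then 1 else 0) * ψ p.2 :=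
  exact_amplitude_amplification_general U Pr hU hPrProj hPrSA zbar ψ hzbar hψ a ha hamp k θ hθ R hR
    hR00
end

section
/- Let a be a real number with 0 < a ≤ 1, let k := ⌈π/(4·arcsin(a)) − 1/2⌉, and let θ := π/(4k+2). Then 0 < sin(θ) ≤ a, so that sin(θ)/a ∈ (0,1]; in particular there exists a 2×2 unitary matrix R with ⟨0|R|0⟩ = sin(θ)/a. -/
/-!
The choice of `k` makes `θ = π / (4k + 2)` at most `arcsin a`, and `θ ∈ (0, π/2]`, so monotonicity
of `sin` on `[-π/2, π/2]` gives `0 < sin θ ≤ a`. Any `c ∈ [-1, 1]` is the corner entry of the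
rotation matrix `!![c, -√(1 - c²); √(1 - c²), c]`.
-/

open Real

lemma pi_div_four_mul_add_two_le {L k : ℝ} (hL : 0 < L) (hk : π / (4 * L) - 1 / 2 ≤ k) :
    π / (4 * k + 2) ≤ L := by
  have hden : 0 < 4 * k + 2 := by linarith [div_pos pi_pos (by positivity : 0 < 4 * L)]
  rw [div_le_iff₀ hden]
  have := (div_le_iff₀ (by positivity : 0 < 4 * L)).1 (by linarith : π / (4 * L) ≤ k + 1 / 2)
  linarith

lemma Matrix.exists_mem_unitaryGroup_apply_zero_zero {c : ℝ} (hc : c ^ 2 ≤ 1) :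
    ∃ R : Matrix (Fin 2) (Fin 2) ℂ, R ∈ Matrix.unitaryGroup (Fin 2) ℂ ∧ R 0 0 = c := by
  set s := √(1 - c ^ 2)
  have hcs : c ^ 2 + s ^ 2 = 1 := by rw [sq_sqrt (by linarith)]; ring
  refine ⟨!![(c : ℂ), -(s : ℂ); (s : ℂ), (c : ℂ)], ?_, rfl⟩
  rw [Matrix.mem_unitaryGroup_iff']
  ext i j
  fin_cases i <;> fin_cases j <;>
    simp [Matrix.mul_apply, Fin.sum_univ_two, Complex.ext_iff] <;>
    nlinarith

theorem rotation_exists_general (a : ℝ) (ha : 0 < a)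
    (k : ℕ) (hk : k = ⌈Real.pi / (4 * Real.arcsin a) - 1 / 2⌉₊)
    (θ : ℝ) (hθ : θ = Real.pi / (4 * k + 2)) :
    0 < Real.sin θ ∧ Real.sin θ ≤ a ∧
    Real.sin θ / a ∈ Set.Ioc (0 : ℝ) 1 ∧
    ∃ R : Matrix (Fin 2) (Fin 2) ℂ,
      R ∈ Matrix.unitaryGroup (Fin 2) ℂ ∧
      R 0 0 = ((Real.sin θ / a : ℝ) : ℂ) := by
  have hθ_pos : 0 < θ := hθ ▸ by positivity
  have hθ_le : θ ≤ arcsin a :=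
    hθ ▸ pi_div_four_mul_add_two_le (arcsin_pos.2 ha) (hk ▸ Nat.le_ceil _)
  have hθ_le_pi_div_two : θ ≤ π / 2 := hθ_le.trans (arcsin_le_pi_div_two a)
  have hsin_pos : 0 < sin θ := sin_pos_of_pos_of_lt_pi hθ_pos (by linarith [pi_pos])
  have hsin_le : sin θ ≤ a :=
    (le_arcsin_iff_sin_le' ⟨by linarith [pi_pos], hθ_le_pi_div_two⟩).1 hθ_le
  have hratio : sin θ / a ∈ Set.Ioc (0 : ℝ) 1 :=
    ⟨div_pos hsin_pos ha, div_le_one_of_le₀ hsin_le ha.le⟩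
  refine ⟨hsin_pos, hsin_le, hratio, Matrix.exists_mem_unitaryGroup_apply_zero_zero
    (pow_le_one₀ hratio.1.le hratio.2)⟩

theorem rotation_exists (a : ℝ) (ha : 0 < a) (ha1 : a ≤ 1)
    (k : ℕ) (hk : k = ⌈Real.pi / (4 * Real.arcsin a) - 1 / 2⌉₊)
    (θ : ℝ) (hθ : θ = Real.pi / (4 * k + 2)) :
    0 < Real.sin θ ∧ Real.sin θ ≤ a ∧
    Real.sin θ / a ∈ Set.Ioc (0 : ℝ) 1 ∧
    ∃ R : Matrix (Fin 2) (Fin 2) ℂ,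
      R ∈ Matrix.unitaryGroup (Fin 2) ℂ ∧
      R 0 0 = ((Real.sin θ / a : ℝ) : ℂ) :=
  rotation_exists_general a ha k hk θ hθ
end

section
/- Let n₁, n₂ ≥ 1, N₁ = 2^{n₁}, N₂ = 2^{n₂}, x₁^{(i)} := i/N₁ and x₂^{(j)} := j/N₂, and define the unitaries U₁ := Σ_i W(x₁^{(i)}) ⊗ E_{ii} ⊗ I_{N₂} and U₂ := Σ_j W(x₂^{(j)}) ⊗ I_{N₁} ⊗ E_{jj} on ℂ² ⊗ ℂ^{N₁} ⊗ ℂ^{N₂}. Then U₁ and U₂ commute and U₁U₂ = Σ_{i,j} W(x₁^{(i)} + x₂^{(j)}) ⊗ E_{ii} ⊗ E_{jj}; in particular, U₁U₂ is a (1,1,0)-block-encoding of the diagonal operator Σ_{i,j} cos(x₁^{(i)} + x₂^{(j)}) E_{ii} ⊗ E_{jj}, i.e., (⟨0| ⊗ I)(U₁U₂)(|0⟩ ⊗ I) = Σ_{i,j} cos(x₁^{(i)} + x₂^{(j)}) E_{ii} ⊗ E_{jj}. -/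
/-!
Controlled gates acting on different control registers multiply blockwise:
`(W a ⊗ Eᵢᵢ ⊗ I)(W b ⊗ I ⊗ Eⱼⱼ) = W a W b ⊗ Eᵢᵢ ⊗ Eⱼⱼ`, in either order. Since the `W` gates
form a commutative one-parameter group, both products equal `Σᵢⱼ W(x₁⁽ⁱ⁾ + x₂⁽ʲ⁾) ⊗ Eᵢᵢ ⊗ Eⱼⱼ`,
whose top-left block is read off from `W(x)₀₀ = cos x`.
-/

open Complex Matrix
open scoped Matrix Kronecker

lemma Wgate_mul_Wgate (a b : ℝ) : Wgate a * Wgate b = Wgate (a + b) := by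
  ext i j
  fin_cases i <;> fin_cases j <;>
    simp [Wgate, Matrix.mul_apply, Fin.sum_univ_two, Real.cos_add, Real.sin_add,
      Complex.ext_iff] <;> ring

lemma Wgate_apply_zero_zero (x : ℝ) : Wgate x 0 0 = Real.cos x := rfl

section ControlledGates

variable {R ι κ m : Type*} [CommSemiring R] [Fintype ι] [Fintype κ] [DecidableEq ι]
  [DecidableEq κ] [Fintype m]

lemma sum_kronecker_single_one_mul_sum_kronecker_one_single
    (A : ι → Matrix m m R) (B : κ → Matrix m m R) :
    (∑ i, A i ⊗ₖ (single i i (1 : R) ⊗ₖ (1 : Matrix κ κ R))) *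
        (∑ j, B j ⊗ₖ ((1 : Matrix ι ι R) ⊗ₖ single j j (1 : R))) =
      ∑ i, ∑ j, (A i * B j) ⊗ₖ (single i i (1 : R) ⊗ₖ single j j (1 : R)) := by
  simp only [Finset.sum_mul, Finset.mul_sum, ← mul_kronecker_mul, Matrix.mul_one,
    Matrix.one_mul]
  exact Finset.sum_comm

lemma sum_kronecker_one_single_mul_sum_kronecker_single_one
    (A : ι → Matrix m m R) (B : κ → Matrix m m R) :
    (∑ j, B j ⊗ₖ ((1 : Matrix ι ι R) ⊗ₖ single j j (1 : R))) *
        (∑ i, A i ⊗ₖ (single i i (1 : R) ⊗ₖ (1 : Matrix κ κ R))) =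
      ∑ i, ∑ j, (B j * A i) ⊗ₖ (single i i (1 : R) ⊗ₖ single j j (1 : R)) := by
  simp only [Finset.sum_mul, Finset.mul_sum, ← mul_kronecker_mul, Matrix.mul_one,
    Matrix.one_mul]

end ControlledGates

theorem sum_variable_block_encoding_general (n₁ n₂ : ℕ) :
    let N₁ : ℕ := 2 ^ n₁
    let N₂ : ℕ := 2 ^ n₂
    -- U₁ := Σᵢ W(x₁⁽ⁱ⁾) ⊗ Eᵢᵢ ⊗ I_{N₂}
    let U₁ : Matrix (Fin 2 × Fin N₁ × Fin N₂) (Fin 2 × Fin N₁ × Fin N₂) ℂ :=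
      ∑ i : Fin N₁, Wgate (((i : ℕ) : ℝ) / (N₁ : ℝ)) ⊗ₖ
        (Matrix.single i i (1 : ℂ) ⊗ₖ (1 : Matrix (Fin N₂) (Fin N₂) ℂ))
    -- U₂ := Σⱼ W(x₂⁽ʲ⁾) ⊗ I_{N₁} ⊗ Eⱼⱼ
    let U₂ : Matrix (Fin 2 × Fin N₁ × Fin N₂) (Fin 2 × Fin N₁ × Fin N₂) ℂ :=
      ∑ j : Fin N₂, Wgate (((j : ℕ) : ℝ) / (N₂ : ℝ)) ⊗ₖ
        ((1 : Matrix (Fin N₁) (Fin N₁) ℂ) ⊗ₖ Matrix.single j j (1 : ℂ))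
    -- U₁ and U₂ commute
    U₁ * U₂ = U₂ * U₁ ∧
    -- U₁U₂ = Σᵢⱼ W(x₁⁽ⁱ⁾ + x₂⁽ʲ⁾) ⊗ Eᵢᵢ ⊗ Eⱼⱼ
    U₁ * U₂ = ∑ i : Fin N₁, ∑ j : Fin N₂,
      Wgate (((i : ℕ) : ℝ) / (N₁ : ℝ) + ((j : ℕ) : ℝ) / (N₂ : ℝ)) ⊗ₖ
        (Matrix.single i i (1 : ℂ) ⊗ₖ Matrix.single j j (1 : ℂ)) ∧
    -- (⟨0| ⊗ I)(U₁U₂)(|0⟩ ⊗ I) = Σᵢⱼ cos(x₁⁽ⁱ⁾ + x₂⁽ʲ⁾) Eᵢᵢ ⊗ Eⱼⱼ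
    (∀ p q : Fin N₁ × Fin N₂,
      (U₁ * U₂) ((0 : Fin 2), p) ((0 : Fin 2), q) =
        (∑ i : Fin N₁, ∑ j : Fin N₂,
          (Real.cos (((i : ℕ) : ℝ) / (N₁ : ℝ) + ((j : ℕ) : ℝ) / (N₂ : ℝ)) : ℂ) •
            (Matrix.single i i (1 : ℂ) ⊗ₖ Matrix.single j j (1 : ℂ))) p q) := by
  intro N₁ N₂ U₁ U₂
  have h₁₂ : U₁ * U₂ = ∑ i : Fin N₁, ∑ j : Fin N₂,
      Wgate (((i : ℕ) : ℝ) / (N₁ : ℝ) + ((j : ℕ) : ℝ) / (N₂ : ℝ)) ⊗ₖ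
        (Matrix.single i i (1 : ℂ) ⊗ₖ Matrix.single j j (1 : ℂ)) := by
    simp only [U₁, U₂, sum_kronecker_single_one_mul_sum_kronecker_one_single, Wgate_mul_Wgate]
  have h₂₁ : U₂ * U₁ = U₁ * U₂ := by
    simp only [h₁₂, U₁, U₂, sum_kronecker_one_single_mul_sum_kronecker_single_one,
      Wgate_mul_Wgate, add_comm]
  refine ⟨h₂₁.symm, h₁₂, fun p q => ?_⟩
  simp [h₁₂, Matrix.sum_apply, kroneckerMap_apply, Wgate_apply_zero_zero]

theorem sum_variable_block_encoding (n₁ n₂ : ℕ) (h₁ : 1 ≤ n₁) (h₂ : 1 ≤ n₂) :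
    let N₁ : ℕ := 2 ^ n₁
    let N₂ : ℕ := 2 ^ n₂
    -- U₁ := Σᵢ W(x₁⁽ⁱ⁾) ⊗ Eᵢᵢ ⊗ I_{N₂}
    let U₁ : Matrix (Fin 2 × Fin N₁ × Fin N₂) (Fin 2 × Fin N₁ × Fin N₂) ℂ :=
      ∑ i : Fin N₁, Wgate (((i : ℕ) : ℝ) / (N₁ : ℝ)) ⊗ₖ
        (Matrix.single i i (1 : ℂ) ⊗ₖ (1 : Matrix (Fin N₂) (Fin N₂) ℂ))
    -- U₂ := Σⱼ W(x₂⁽ʲ⁾) ⊗ I_{N₁} ⊗ Eⱼⱼ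
    let U₂ : Matrix (Fin 2 × Fin N₁ × Fin N₂) (Fin 2 × Fin N₁ × Fin N₂) ℂ :=
      ∑ j : Fin N₂, Wgate (((j : ℕ) : ℝ) / (N₂ : ℝ)) ⊗ₖ
        ((1 : Matrix (Fin N₁) (Fin N₁) ℂ) ⊗ₖ Matrix.single j j (1 : ℂ))
    -- U₁ and U₂ commute
    U₁ * U₂ = U₂ * U₁ ∧
    -- U₁U₂ = Σᵢⱼ W(x₁⁽ⁱ⁾ + x₂⁽ʲ⁾) ⊗ Eᵢᵢ ⊗ Eⱼⱼ
    U₁ * U₂ = ∑ i : Fin N₁, ∑ j : Fin N₂,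
      Wgate (((i : ℕ) : ℝ) / (N₁ : ℝ) + ((j : ℕ) : ℝ) / (N₂ : ℝ)) ⊗ₖ
        (Matrix.single i i (1 : ℂ) ⊗ₖ Matrix.single j j (1 : ℂ)) ∧
    -- (⟨0| ⊗ I)(U₁U₂)(|0⟩ ⊗ I) = Σᵢⱼ cos(x₁⁽ⁱ⁾ + x₂⁽ʲ⁾) Eᵢᵢ ⊗ Eⱼⱼ
    (∀ p q : Fin N₁ × Fin N₂,
      (U₁ * U₂) ((0 : Fin 2), p) ((0 : Fin 2), q) =
        (∑ i : Fin N₁, ∑ j : Fin N₂,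
          (Real.cos (((i : ℕ) : ℝ) / (N₁ : ℝ) + ((j : ℕ) : ℝ) / (N₂ : ℝ)) : ℂ) •
            (Matrix.single i i (1 : ℂ) ⊗ₖ Matrix.single j j (1 : ℂ))) p q) :=
  sum_variable_block_encoding_general n₁ n₂
end

section
/- Let N ≥ 1 and let f, g : {0,…,N−1} → ℝ be functions, both not identically zero, with max_i |f(i)| ≤ 1 and max_i |g(i)| ≤ 1. Let 𝒩_f := (Σ_i f(i)²)^{1/2} and 𝒩_g := (Σ_i g(i)²)^{1/2}, and let |ψ_f⟩ := 𝒩_f^{−1}(f(0),…,f(N−1)) and |ψ_g⟩ := 𝒩_g^{−1}(g(0),…,g(N−1)) be the corresponding normalized states. Suppose ε > 0 and |f(i) − g(i)| ≤ ε · min(𝒩_f, 𝒩_g)/√N for all i. Then the trace distance between the pure states |ψ_f⟩ and |ψ_g⟩ satisfies √(1 − ⟨ψ_f, ψ_g⟩²) ≤ 2ε. -/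
open scoped RealInnerProductSpace

/-! The pointwise bound gives `‖f − g‖₂ ≤ ε · min ‖f‖₂ ‖g‖₂`. Normalizing at most doubles the
relative error, `‖f/‖f‖ − g/‖g‖‖ ≤ 2‖f − g‖/‖f‖`, and for unit vectors
`√(1 − ⟨u,v⟩²) ≤ ‖u − v‖` since `‖u − v‖² = 2 − 2⟨u,v⟩ ≥ 1 − ⟨u,v⟩²`. -/

theorem sqrt_one_sub_inner_sq_le_norm_sub {E : Type*} [NormedAddCommGroup E]
    [InnerProductSpace ℝ E] {u v : E} (hu : ‖u‖ = 1) (hv : ‖v‖ = 1) :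
    √(1 - ⟪u, v⟫ ^ 2) ≤ ‖u - v‖ := by
  rw [Real.sqrt_le_left (norm_nonneg _), norm_sub_sq_real, hu, hv]
  nlinarith [sq_nonneg (1 - ⟪u, v⟫)]

theorem norm_inv_norm_smul_sub_inv_norm_smul_le {E : Type*} [NormedAddCommGroup E]
    [NormedSpace ℝ E] {x : E} (hx : x ≠ 0) (y : E) :
    ‖‖x‖⁻¹ • x - ‖y‖⁻¹ • y‖ ≤ 2 * ‖x - y‖ / ‖x‖ := by
  have hx' : 0 < ‖x‖ := norm_pos_iff.2 hx
  have hrescale : ‖(‖x‖⁻¹ - ‖y‖⁻¹) • y‖ ≤ ‖x - y‖ / ‖x‖ := by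
    rcases eq_or_ne y 0 with rfl | hy
    · simp only [smul_zero, norm_zero]; positivity
    have hy' : 0 < ‖y‖ := norm_pos_iff.2 hy
    calc ‖(‖x‖⁻¹ - ‖y‖⁻¹) • y‖ = |‖y‖ - ‖x‖| / ‖x‖ := by
          rw [norm_smul, Real.norm_eq_abs, inv_sub_inv hx'.ne' hy'.ne', abs_div,
            abs_of_pos (mul_pos hx' hy')]
          field_simp
      _ ≤ ‖x - y‖ / ‖x‖ := by
          gcongr
          rw [abs_sub_comm]
          exact abs_norm_sub_norm_le x y
  calc ‖‖x‖⁻¹ • x - ‖y‖⁻¹ • y‖ = ‖‖x‖⁻¹ • (x - y) + (‖x‖⁻¹ - ‖y‖⁻¹) • y‖ := by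
        congr 1; rw [smul_sub, sub_smul]; abel
    _ ≤ ‖x - y‖ / ‖x‖ + ‖x - y‖ / ‖x‖ := by
        refine (norm_add_le _ _).trans (add_le_add ?_ hrescale)
        rw [norm_smul, norm_inv, norm_norm, inv_mul_eq_div]
    _ = 2 * ‖x - y‖ / ‖x‖ := by ring

theorem EuclideanSpace.norm_le_of_forall_norm_le_div_sqrt_card {𝕜 ι : Type*} [RCLike 𝕜]
    [Fintype ι] {x : EuclideanSpace 𝕜 ι} {c : ℝ} (hc : 0 ≤ c)
    (hx : ∀ i, ‖x i‖ ≤ c / √(Fintype.card ι)) : ‖x‖ ≤ c := by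
  rw [← sq_le_sq₀ (norm_nonneg x) hc, EuclideanSpace.norm_sq_eq]
  calc ∑ i, ‖x i‖ ^ 2 ≤ ∑ _i : ι, (c / √(Fintype.card ι)) ^ 2 := by
        gcongr with i; exact hx i
    _ = Fintype.card ι * (c ^ 2 / Fintype.card ι) := by
        rw [Finset.sum_const, Finset.card_univ, nsmul_eq_mul, div_pow,
          Real.sq_sqrt (Nat.cast_nonneg _)]
    _ ≤ c ^ 2 := by
        rcases (Nat.cast_nonneg (Fintype.card ι) : (0 : ℝ) ≤ _).eq_or_lt with hcard | hcard
        · rw [← hcard, zero_mul]; positivity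
        · rw [mul_div_cancel₀ _ hcard.ne']

theorem trace_distance_of_pointwise_close_general (N : ℕ)
    (f g : Fin N → ℝ) (hf : f ≠ 0) (hg : g ≠ 0)
    (ε : ℝ) (hε : 0 < ε)
    (hclose : ∀ i, |f i - g i| ≤
      ε * min (Real.sqrt (∑ i', f i' ^ 2)) (Real.sqrt (∑ i', g i' ^ 2)) /
        Real.sqrt N) :
    Real.sqrt (1 -
      (∑ i, (f i / Real.sqrt (∑ i', f i' ^ 2)) *
            (g i / Real.sqrt (∑ i', g i' ^ 2))) ^ 2) ≤ 2 * ε := by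
  have norm_toLp (h : Fin N → ℝ) : ‖WithLp.toLp 2 h‖ = √(∑ i, h i ^ 2) := by
    rw [← EuclideanSpace.real_norm_sq_eq, Real.sqrt_sq (norm_nonneg _)]
  set F : EuclideanSpace ℝ (Fin N) := WithLp.toLp 2 f
  set G : EuclideanSpace ℝ (Fin N) := WithLp.toLp 2 g
  have hF : F ≠ 0 := by simpa [F] using hf
  have hG : G ≠ 0 := by simpa [G] using hg
  have hinner : ∑ i, (f i / ‖F‖) * (g i / ‖G‖) = ⟪‖F‖⁻¹ • F, ‖G‖⁻¹ • G⟫ := by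
    rw [real_inner_smul_left, real_inner_smul_right, EuclideanSpace.inner_toLp_toLp,
      dotProduct, Finset.mul_sum, Finset.mul_sum]
    exact Finset.sum_congr rfl fun i _ => by rw [star_trivial]; ring
  rw [← norm_toLp f, ← norm_toLp g] at hclose ⊢; rw [hinner]
  have hFG : ‖F - G‖ ≤ ε * min ‖F‖ ‖G‖ :=
    EuclideanSpace.norm_le_of_forall_norm_le_div_sqrt_card (by positivity)
      fun i => by simpa [F, G] using hclose i
  calc √(1 - ⟪‖F‖⁻¹ • F, ‖G‖⁻¹ • G⟫ ^ 2) ≤ ‖‖F‖⁻¹ • F - ‖G‖⁻¹ • G‖ :=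
        sqrt_one_sub_inner_sq_le_norm_sub (norm_smul_inv_norm hF) (norm_smul_inv_norm hG)
    _ ≤ 2 * ‖F - G‖ / ‖F‖ := norm_inv_norm_smul_sub_inv_norm_smul_le hF G
    _ ≤ 2 * (ε * min ‖F‖ ‖G‖) / ‖F‖ := by gcongr
    _ ≤ 2 * (ε * ‖F‖) / ‖F‖ := by gcongr; exact min_le_left _ _
    _ = 2 * ε := by field_simp

theorem trace_distance_of_pointwise_close (N : ℕ) (hN : 1 ≤ N)
    (f g : Fin N → ℝ) (hf : f ≠ 0) (hg : g ≠ 0)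
    (hfb : ∀ i, |f i| ≤ 1) (hgb : ∀ i, |g i| ≤ 1)
    (ε : ℝ) (hε : 0 < ε)
    (hclose : ∀ i, |f i - g i| ≤
      ε * min (Real.sqrt (∑ i', f i' ^ 2)) (Real.sqrt (∑ i', g i' ^ 2)) /
        Real.sqrt N) :
    Real.sqrt (1 -
      (∑ i, (f i / Real.sqrt (∑ i', f i' ^ 2)) *
            (g i / Real.sqrt (∑ i', g i' ^ 2))) ^ 2) ≤ 2 * ε :=
  trace_distance_of_pointwise_close_general N f g hf hg ε hε hclose
end
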